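/- arXiv:1307.1077 — 8 statements merged into one kernel-verified Lean document; each statement's English description precedes it below -/
import Mathlib

section
/- Let {P_s : s ∈ S} be a family of probability distributions on (Ω, 𝒜) indexed by a countable set S, let Π be a probability measure on S with π(s) > 0 for all s, and let P* on Ω × S be the mixture P*(A) = Σ_s π(s) P_s(A_s) where A_s = {ω : (ω,s) ∈ A}. Then for random variables X, Y, Z on Ω and the coordinate projection σ onto S, the extended conditional independence X ⫫ Y | (Z, σ) (meaning: for every bounded measurable h(X) there exists w(s, Z), measurable in Z for each s, with E_{P_s}[h(X) | Y, Z] = w(s, Z) a.s. [P_s] for all s) holds if and only if the ordinary stochastic conditional independence X ⫫ Y | (Z, σ) holds under P*. -/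
open MeasureTheory

/-- Conditional independence `X ⫫ Y | Z` under `P`, following Dawid's definition:
for every bounded measurable function `h(X)` there exists a measurable function `w(Z)`
that is a version of `E[h(X) | Y, Z]` almost surely under `P`. -/
def CondIndepFun {Ω α β γ : Type*} [MeasurableSpace Ω] [MeasurableSpace α]
    [MeasurableSpace β] [MeasurableSpace γ]
    (P : Measure Ω) (X : Ω → α) (Y : Ω → β) (Z : Ω → γ) : Prop :=
  ∀ h : α → ℝ, Measurable h → (∃ C, ∀ x, |h x| ≤ C) →
    ∃ w : γ → ℝ, Measurable w ∧
      (fun ω => w (Z ω)) =ᵐ[P]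
        P[fun ω => h (X ω) |
          MeasurableSpace.comap Y inferInstance ⊔ MeasurableSpace.comap Z inferInstance]

/-- The mixture measure `P*` on `Ω × S`: `P*(A) = ∑ₛ π(s) Pₛ(Aₛ)`, realized as the sum of the
pushforwards of the weighted measures `π(s) • Pₛ` under `ω ↦ (ω, s)`. -/
noncomputable def mixtureMeasure {Ω S : Type*} [MeasurableSpace Ω] [MeasurableSpace S]
    (P : S → Measure Ω) (π : S → ENNReal) : Measure (Ω × S) :=
  Measure.sum fun s => π s • (P s).map fun ω => (ω, s)

/-- Extended conditional independence `X ⫫ Y | (Z, σ)`: for every bounded measurable `h(X)`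
there exists `w(s, Z)`, measurable in `Z` for each `s`, with
`E_{Pₛ}[h(X) | Y, Z] = w(s, Z)` a.s. `[Pₛ]` for every regime `s`. -/
def ECIGivenRegime {Ω S α β γ : Type*} [MeasurableSpace Ω] [MeasurableSpace α]
    [MeasurableSpace β] [MeasurableSpace γ]
    (P : S → Measure Ω) (X : Ω → α) (Y : Ω → β) (Z : Ω → γ) : Prop :=
  ∀ h : α → ℝ, Measurable h → (∃ C, ∀ x, |h x| ≤ C) →
    ∃ w : S → γ → ℝ, (∀ s, Measurable (w s)) ∧
      ∀ s, (fun ω => w s (Z ω)) =ᵐ[P s]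
        (P s)[fun ω => h (X ω) |
          MeasurableSpace.comap Y inferInstance ⊔ MeasurableSpace.comap Z inferInstance]

set_option linter.unusedSectionVars false

section Aux

variable {Ω S : Type*} [MeasurableSpace Ω] [Countable S] [MeasurableSpace S]
  [MeasurableSingletonClass S] {P : S → Measure Ω} {π : S → ENNReal}

lemma mixture_apply (A : Set (Ω × S)) (hA : MeasurableSet A) :
    mixtureMeasure P π A = ∑' s, π s * P s ((fun ω => (ω, s)) ⁻¹' A) := by
  rw [mixtureMeasure, Measure.sum_apply _ hA]
  refine tsum_congr fun s => ?_
  rw [Measure.smul_apply, Measure.map_apply measurable_prodMk_right hA, smul_eq_mul]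

lemma mixture_isProbability (hP : ∀ s, IsProbabilityMeasure (P s)) (hπ1 : ∑' s, π s = 1) :
    IsProbabilityMeasure (mixtureMeasure P π) := by
  constructor
  rw [mixture_apply _ MeasurableSet.univ]
  simp only [Set.preimage_univ]
  have : ∀ s, P s Set.univ = 1 := fun s => (hP s).measure_univ
  simp_rw [this, mul_one, hπ1]

lemma mixture_restrict {A : Set (Ω × S)} (hA : MeasurableSet A) :
    (mixtureMeasure P π).restrict A
      = Measure.sum fun s =>
          π s • ((P s).restrict ((fun ω => (ω, s)) ⁻¹' A)).map fun ω => (ω, s) := by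
  rw [mixtureMeasure, Measure.restrict_sum_of_countable]
  congr 1
  funext s
  rw [Measure.restrict_smul, Measure.restrict_map measurable_prodMk_right hA]

lemma mixture_setIntegral {f : Ω × S → ℝ} (hfm : Measurable f)
    {A : Set (Ω × S)} (hA : MeasurableSet A)
    (hf : IntegrableOn f A (mixtureMeasure P π)) :
    ∫ p in A, f p ∂(mixtureMeasure P π)
      = ∑' s, (π s).toReal * ∫ ω in (fun ω => (ω, s)) ⁻¹' A, f (ω, s) ∂(P s) := by
  have hres := mixture_restrict (P := P) (π := π) hA
  rw [show (∫ p in A, f p ∂(mixtureMeasure P π)) = ∫ p, f p ∂((mixtureMeasure P π).restrict A)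
    from rfl, hres, integral_sum_measure (hres ▸ hf)]
  refine tsum_congr fun s => ?_
  rw [integral_smul_measure,
    integral_map measurable_prodMk_right.aemeasurable hfm.stronglyMeasurable.aestronglyMeasurable]
  rfl

lemma integrable_slice (hπ : ∀ s, 0 < π s) (hπ1 : ∑' s, π s = 1)
    {f : Ω × S → ℝ} (hf : Integrable f (mixtureMeasure P π)) (s : S) :
    Integrable (fun ω => f (ω, s)) (P s) := by
  have hle : (π s • (P s).map fun ω => (ω, s)) ≤ mixtureMeasure P π := Measure.le_sum _ s
  have h1 : Integrable f (π s • (P s).map fun ω => (ω, s)) := hf.mono_measure hle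
  have hne : π s ≠ ⊤ := by
    have : π s ≤ 1 := hπ1 ▸ ENNReal.le_tsum s
    exact (lt_of_le_of_lt this ENNReal.one_lt_top).ne
  have h2 : Integrable f ((P s).map fun ω => (ω, s)) :=
    (integrable_smul_measure (hπ s).ne' hne).mp h1
  exact (integrable_map_measure h2.aestronglyMeasurable
    measurable_prodMk_right.aemeasurable).mp h2

lemma integrable_of_bdd {μ : Measure Ω} [IsFiniteMeasure μ] {f : Ω → ℝ} (hf : Measurable f)
    {C : ℝ} (hC : ∀ x, |f x| ≤ C) : Integrable f μ :=
  ⟨hf.aestronglyMeasurable,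
    HasFiniteIntegral.of_bounded (C := C) (ae_of_all _ fun x => by
      simpa [Real.norm_eq_abs] using hC x)⟩

end Aux

section Slice

variable {Ω S β γ : Type*} [MeasurableSpace Ω] [MeasurableSpace S] [MeasurableSingletonClass S]
  [MeasurableSpace β] [MeasurableSpace γ] {Y : Ω → β} {Z : Ω → γ}

lemma slice_measurableSet {A : Set (Ω × S)}
    (hA : MeasurableSet[MeasurableSpace.comap (fun p : Ω × S => Y p.1) inferInstance ⊔
      MeasurableSpace.comap (fun p : Ω × S => (Z p.1, p.2)) inferInstance] A) (s : S) :
    MeasurableSet[MeasurableSpace.comap Y inferInstance ⊔ MeasurableSpace.comap Z inferInstance]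
      ((fun ω => (ω, s)) ⁻¹' A) := by
  have hle : MeasurableSpace.comap (fun ω : Ω => (ω, s))
      (MeasurableSpace.comap (fun p : Ω × S => Y p.1) inferInstance ⊔
        MeasurableSpace.comap (fun p : Ω × S => (Z p.1, p.2)) inferInstance)
      ≤ MeasurableSpace.comap Y inferInstance ⊔ MeasurableSpace.comap Z inferInstance := by
    rw [MeasurableSpace.comap_sup, MeasurableSpace.comap_comp, MeasurableSpace.comap_comp]
    refine sup_le ?_ ?_
    · exact le_sup_left
    · have hps : (inferInstance : MeasurableSpace (γ × S))
          = MeasurableSpace.comap Prod.fst inferInstance ⊔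
            MeasurableSpace.comap Prod.snd inferInstance := rfl
      rw [hps, MeasurableSpace.comap_sup, MeasurableSpace.comap_comp, MeasurableSpace.comap_comp]
      refine sup_le ?_ ?_
      · exact le_sup_right
      · have : (Prod.snd ∘ ((fun p : Ω × S => (Z p.1, p.2)) ∘ fun ω : Ω => (ω, s)))
            = fun _ : Ω => s := rfl
        rw [this, MeasurableSpace.comap_const]
        exact bot_le
  exact hle _ ⟨A, hA, rfl⟩

lemma prod_singleton_measurableSet {B : Set Ω} (s : S)
    (hB : MeasurableSet[MeasurableSpace.comap Y inferInstance ⊔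
      MeasurableSpace.comap Z inferInstance] B) :
    MeasurableSet[MeasurableSpace.comap (fun p : Ω × S => Y p.1) inferInstance ⊔
      MeasurableSpace.comap (fun p : Ω × S => (Z p.1, p.2)) inferInstance]
      (B ×ˢ ({s} : Set S)) := by
  have h1 : MeasurableSet[MeasurableSpace.comap (fun p : Ω × S => Y p.1) inferInstance ⊔
      MeasurableSpace.comap (fun p : Ω × S => (Z p.1, p.2)) inferInstance]
      ((Prod.fst : Ω × S → Ω) ⁻¹' B) := by
    have hle : MeasurableSpace.comap (Prod.fst : Ω × S → Ω)
        (MeasurableSpace.comap Y inferInstance ⊔ MeasurableSpace.comap Z inferInstance)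
        ≤ MeasurableSpace.comap (fun p : Ω × S => Y p.1) inferInstance ⊔
          MeasurableSpace.comap (fun p : Ω × S => (Z p.1, p.2)) inferInstance := by
      rw [MeasurableSpace.comap_sup, MeasurableSpace.comap_comp, MeasurableSpace.comap_comp]
      refine sup_le le_sup_left ?_
      refine le_trans ?_ le_sup_right
      have : (Z ∘ Prod.fst : Ω × S → γ)
          = (Prod.fst : γ × S → γ) ∘ fun p : Ω × S => (Z p.1, p.2) := rfl
      rw [this, ← MeasurableSpace.comap_comp]
      exact MeasurableSpace.comap_mono measurable_fst.comap_le
    exact hle _ ⟨B, hB, rfl⟩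
  have h2 : MeasurableSet[MeasurableSpace.comap (fun p : Ω × S => Y p.1) inferInstance ⊔
      MeasurableSpace.comap (fun p : Ω × S => (Z p.1, p.2)) inferInstance]
      ((fun p : Ω × S => (Z p.1, p.2)) ⁻¹' (Set.univ ×ˢ ({s} : Set S))) := by
    have hle2 : MeasurableSpace.comap (fun p : Ω × S => (Z p.1, p.2)) inferInstance
        ≤ MeasurableSpace.comap (fun p : Ω × S => Y p.1) inferInstance ⊔
          MeasurableSpace.comap (fun p : Ω × S => (Z p.1, p.2)) inferInstance := le_sup_right
    exact hle2 _ ⟨_, MeasurableSet.univ.prod (measurableSet_singleton s), rfl⟩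
  have hEq : B ×ˢ ({s} : Set S)
      = ((Prod.fst : Ω × S → Ω) ⁻¹' B)
        ∩ ((fun p : Ω × S => (Z p.1, p.2)) ⁻¹' (Set.univ ×ˢ ({s} : Set S))) := by
    ext ⟨ω, t⟩
    simp only [Set.mem_prod, Set.mem_preimage, Set.mem_inter_iff, Set.mem_singleton_iff,
      Set.mem_univ, true_and]
  rw [hEq]
  exact h1.inter h2

end Slice

/-- Extended conditional independence `X ⫫ Y | (Z, σ)` over a countable regime set `S` holds
if and only if ordinary stochastic conditional independence `X ⫫ Y | (Z, σ)` holds under the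
mixture measure `P*` (with strictly positive weights summing to one). -/
theorem eciGivenRegime_iff_condIndepFun_mixture
    {Ω S α β γ : Type*} [MeasurableSpace Ω] [MeasurableSpace α]
    [MeasurableSpace β] [MeasurableSpace γ]
    [Countable S] [MeasurableSpace S] [MeasurableSingletonClass S]
    (P : S → Measure Ω) (hP : ∀ s, IsProbabilityMeasure (P s))
    (π : S → ENNReal) (hπ : ∀ s, 0 < π s) (hπ1 : ∑' s, π s = 1)
    (X : Ω → α) (Y : Ω → β) (Z : Ω → γ)
    (hX : Measurable X) (hY : Measurable Y) (hZ : Measurable Z) :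
    ECIGivenRegime P X Y Z ↔
      CondIndepFun (mixtureMeasure P π)
        (fun p => X p.1) (fun p => Y p.1) (fun p => (Z p.1, p.2)) := by
  have hπtop : ∀ s, π s ≠ ⊤ := fun s =>
    (lt_of_le_of_lt (hπ1 ▸ ENNReal.le_tsum s) ENNReal.one_lt_top).ne
  haveI hPstar : IsProbabilityMeasure (mixtureMeasure P π) := mixture_isProbability hP hπ1
  have h𝒢 : (MeasurableSpace.comap Y inferInstance ⊔ MeasurableSpace.comap Z inferInstance)
      ≤ (inferInstance : MeasurableSpace Ω) := sup_le hY.comap_le hZ.comap_le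
  have hZ' : Measurable fun p : Ω × S => (Z p.1, p.2) :=
    (hZ.comp measurable_fst).prodMk measurable_snd
  have hm' : (MeasurableSpace.comap (fun p : Ω × S => Y p.1) inferInstance ⊔
      MeasurableSpace.comap (fun p : Ω × S => (Z p.1, p.2)) inferInstance)
      ≤ (inferInstance : MeasurableSpace (Ω × S)) :=
    sup_le (hY.comp measurable_fst).comap_le hZ'.comap_le
  constructor
  · -- ECI → CondIndep under the mixture
    intro hECI h hh hbdd
    obtain ⟨C, hC⟩ := hbdd
    obtain ⟨w, hwm, hw⟩ := hECI h hh ⟨C, hC⟩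
    set C' : ℝ := max C 0 with hC'def
    have hC'0 : (0 : ℝ) ≤ C' := le_max_right _ _
    have hC' : ∀ x, |h x| ≤ C' := fun x => (hC x).trans (le_max_left _ _)
    set w' : S → γ → ℝ := fun s c => max (-C') (min (w s c) C') with hw'def
    have hw'm : ∀ s, Measurable (w' s) := fun s =>
      measurable_const.max ((hwm s).min measurable_const)
    have hw'bd : ∀ s c, |w' s c| ≤ C' := by
      intro s c
      rw [abs_le]
      exact ⟨le_max_left _ _, max_le (neg_le_self hC'0) (min_le_right _ _)⟩
    have hw' : ∀ s, (fun ω => w' s (Z ω)) =ᵐ[P s]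
        (P s)[(fun ω => h (X ω)) |
          MeasurableSpace.comap Y inferInstance ⊔ MeasurableSpace.comap Z inferInstance] := by
      intro s
      haveI := hP s
      have hbdd2 : ∀ᵐ ω ∂(P s),
          |((P s)[(fun ω => h (X ω)) |
            MeasurableSpace.comap Y inferInstance ⊔ MeasurableSpace.comap Z inferInstance]) ω|
            ≤ ((⟨C', hC'0⟩ : NNReal) : ℝ) :=
        ae_bdd_condExp_of_ae_bdd (ae_of_all _ fun ω => hC' (X ω))
      filter_upwards [hw s, hbdd2] with ω h1 h2
      have h2' : -C' ≤ w s (Z ω) ∧ w s (Z ω) ≤ C' := abs_le.mp (h1 ▸ h2)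
      simp only [hw'def]
      rw [min_eq_left h2'.2, max_eq_right h2'.1]
      exact h1
    set W : γ × S → ℝ := fun q => w' q.2 q.1 with hWdef
    have hWm : Measurable W := measurable_from_prod_countable_left fun s => hw'm s
    have hgmeas : Measurable fun p : Ω × S => W (Z p.1, p.2) := hWm.comp hZ'
    have hgbdd : ∀ p : Ω × S, |W (Z p.1, p.2)| ≤ C' := fun p => hw'bd _ _
    have hfm : Measurable fun p : Ω × S => h (X p.1) := hh.comp (hX.comp measurable_fst)
    have hfint : Integrable (fun p : Ω × S => h (X p.1)) (mixtureMeasure P π) :=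
      integrable_of_bdd hfm fun p => hC' (X p.1)
    have hgint : Integrable (fun p : Ω × S => W (Z p.1, p.2)) (mixtureMeasure P π) :=
      integrable_of_bdd hgmeas hgbdd
    refine ⟨W, hWm, ?_⟩
    refine ae_eq_condExp_of_forall_setIntegral_eq hm' hfint
      (fun A _ _ => hgint.integrableOn) ?_ ?_
    · intro A hA _
      have hAmeas : MeasurableSet A := hm' A hA
      rw [mixture_setIntegral hgmeas hAmeas hgint.integrableOn,
        mixture_setIntegral hfm hAmeas hfint.integrableOn]
      refine tsum_congr fun s => ?_
      congr 1
      haveI := hP s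
      have hsl : MeasurableSet[MeasurableSpace.comap Y inferInstance ⊔
          MeasurableSpace.comap Z inferInstance] ((fun ω => (ω, s)) ⁻¹' A) :=
        slice_measurableSet hA s
      calc ∫ ω in (fun ω => (ω, s)) ⁻¹' A, W (Z ω, s) ∂(P s)
          = ∫ ω in (fun ω => (ω, s)) ⁻¹' A,
              ((P s)[(fun ω => h (X ω)) |
                MeasurableSpace.comap Y inferInstance ⊔
                  MeasurableSpace.comap Z inferInstance]) ω ∂(P s) :=
            setIntegral_congr_ae (h𝒢 _ hsl) ((hw' s).mono fun ω hω _ => hω)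
        _ = ∫ ω in (fun ω => (ω, s)) ⁻¹' A, h (X ω) ∂(P s) :=
            setIntegral_condExp h𝒢 (integrable_of_bdd (hh.comp hX) fun ω => hC' (X ω)) hsl
    · refine StronglyMeasurable.aestronglyMeasurable ?_
      refine Measurable.stronglyMeasurable ?_
      have hcm : Measurable[MeasurableSpace.comap (fun p : Ω × S => (Z p.1, p.2)) inferInstance]
          fun p : Ω × S => (Z p.1, p.2) := measurable_iff_comap_le.mpr le_rfl
      exact (hWm.comp hcm).mono le_sup_right le_rfl
  · -- CondIndep under the mixture → ECI
    intro hCI h hh hbdd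
    obtain ⟨C, hC⟩ := hbdd
    obtain ⟨w, hwm, hw⟩ := hCI h hh ⟨C, hC⟩
    have hfm : Measurable fun p : Ω × S => h (X p.1) := hh.comp (hX.comp measurable_fst)
    have hfint : Integrable (fun p : Ω × S => h (X p.1)) (mixtureMeasure P π) :=
      integrable_of_bdd hfm fun p => hC (X p.1)
    have hgmeas : Measurable fun p : Ω × S => w (Z p.1, p.2) := hwm.comp hZ'
    have hgint : Integrable (fun p : Ω × S => w (Z p.1, p.2)) (mixtureMeasure P π) :=
      integrable_condExp.congr hw.symm
    refine ⟨fun s c => w (c, s), fun s => hwm.comp measurable_prodMk_right, fun s => ?_⟩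
    haveI := hP s
    have hπs0 : (π s).toReal ≠ 0 := ENNReal.toReal_ne_zero.mpr ⟨(hπ s).ne', hπtop s⟩
    refine ae_eq_condExp_of_forall_setIntegral_eq h𝒢 (integrable_of_bdd (hh.comp hX) fun ω => hC (X ω))
      (fun B _ _ => (integrable_slice hπ hπ1 hgint s).integrableOn) ?_ ?_
    · intro B hB _
      have hBm : MeasurableSet B := h𝒢 _ hB
      have hABm' : MeasurableSet[MeasurableSpace.comap (fun p : Ω × S => Y p.1) inferInstance ⊔
          MeasurableSpace.comap (fun p : Ω × S => (Z p.1, p.2)) inferInstance]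
          (B ×ˢ ({s} : Set S)) := prod_singleton_measurableSet s hB
      have hABm : MeasurableSet (B ×ˢ ({s} : Set S)) := hBm.prod (measurableSet_singleton s)
      have key : ∫ p in B ×ˢ ({s} : Set S), w (Z p.1, p.2) ∂(mixtureMeasure P π)
          = ∫ p in B ×ˢ ({s} : Set S), h (X p.1) ∂(mixtureMeasure P π) := by
        rw [setIntegral_congr_ae hABm (hw.mono fun p hp _ => hp)]
        exact setIntegral_condExp hm' hfint hABm'
      rw [mixture_setIntegral hgmeas hABm hgint.integrableOn,
        mixture_setIntegral hfm hABm hfint.integrableOn] at key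
      have hpre_ne : ∀ s', s' ≠ s →
          (fun ω : Ω => (ω, s')) ⁻¹' (B ×ˢ ({s} : Set S)) = ∅ := by
        intro s' hs'
        ext ω
        simp only [Set.mem_preimage, Set.mem_prod, Set.mem_singleton_iff,
          Set.mem_empty_iff_false, iff_false, not_and]
        exact fun _ hc => hs' hc
      have hpre_self : (fun ω : Ω => (ω, s)) ⁻¹' (B ×ˢ ({s} : Set S)) = B := by
        ext ω
        simp only [Set.mem_preimage, Set.mem_prod, Set.mem_singleton_iff, and_true]
      have e1 : ∑' s', (π s').toReal *
            ∫ ω in (fun ω : Ω => (ω, s')) ⁻¹' (B ×ˢ ({s} : Set S)), w (Z ω, s') ∂(P s')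
          = (π s).toReal * ∫ ω in B, w (Z ω, s) ∂(P s) := by
        rw [tsum_eq_single s fun s' hs' => by rw [hpre_ne s' hs']; simp, hpre_self]
      have e2 : ∑' s', (π s').toReal *
            ∫ ω in (fun ω : Ω => (ω, s')) ⁻¹' (B ×ˢ ({s} : Set S)), h (X ω) ∂(P s')
          = (π s).toReal * ∫ ω in B, h (X ω) ∂(P s) := by
        rw [tsum_eq_single s fun s' hs' => by rw [hpre_ne s' hs']; simp, hpre_self]
      exact mul_left_cancel₀ hπs0 ((e1.symm.trans key).trans e2)
    · refine StronglyMeasurable.aestronglyMeasurable ?_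
      refine Measurable.stronglyMeasurable ?_
      have hcm : Measurable[MeasurableSpace.comap Z inferInstance] Z :=
        measurable_iff_comap_le.mpr le_rfl
      exact ((hwm.comp measurable_prodMk_right).comp hcm).mono le_sup_right le_rfl
end

section
/- Under the mixture construction P* over a countable regime set S with strictly positive weights, the extended conditional independence X ⫫ (Y, σ) | Z (meaning: there exists a single measurable function w(Z) such that E_{P_s}[h(X) | Y, Z] = w(Z) a.s. [P_s] for every s ∈ S and every bounded measurable h(X)) holds if and only if X ⫫ (Y, σ) | Z holds as ordinary stochastic conditional independence under P*. -/
/-!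
Under `P* = ∑ₛ π(s) Pₛ ⊗ δₛ`, the σ-algebra generated by `(Y, σ)` and `Z` on `Ω × S` is the
product of `σ(Y, Z)` with the discrete σ-algebra of `S`. Its sets therefore have
`σ(Y, Z)`-measurable slices, so `P*`-set integrals are `π`-weighted sums of `Pₛ`-set integrals
over slices; and it contains the rectangles `B × {s}` with `B ∈ σ(Y, Z)`, on which a `P*`-set
integral is `π(s)` times a `Pₛ`-set integral. Hence `w(Z)` satisfies the defining identities of
`E*[h(X) | Y, σ, Z]` iff it satisfies those of `Eₛ[h(X) | Y, Z]` for every `s`: one way by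
summing over `s`, the other by restricting to rectangles and dividing by `π(s) > 0`.
-/

open MeasureTheory

/-- Extended conditional independence `X ⫫ (Y, σ) | Z`: there exists a *single* measurable
function `w(Z)` such that `E_{Pₛ}[h(X) | Y, Z] = w(Z)` a.s. `[Pₛ]` for every regime `s`,
for each bounded measurable `h(X)`. -/
def ECIRegime {Ω S α β γ : Type*} [MeasurableSpace Ω] [MeasurableSpace α]
    [MeasurableSpace β] [MeasurableSpace γ]
    (P : S → Measure Ω) (X : Ω → α) (Y : Ω → β) (Z : Ω → γ) : Prop :=
  ∀ h : α → ℝ, Measurable h → (∃ C, ∀ x, |h x| ≤ C) →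
    ∃ w : γ → ℝ, Measurable w ∧
      ∀ s, (fun ω => w (Z ω)) =ᵐ[P s]
        (P s)[fun ω => h (X ω) |
          MeasurableSpace.comap Y inferInstance ⊔ MeasurableSpace.comap Z inferInstance]

lemma MeasurableSpace.comap_sup_comap_eq_prod {Ω S β γ : Type*} [MeasurableSpace S]
    [MeasurableSpace β] [MeasurableSpace γ] (Y : Ω → β) (Z : Ω → γ) :
    MeasurableSpace.comap (fun p : Ω × S => (Y p.1, p.2)) inferInstance ⊔
        MeasurableSpace.comap (fun p : Ω × S => Z p.1) inferInstance =
      (MeasurableSpace.comap Y inferInstance ⊔ MeasurableSpace.comap Z inferInstance).prod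
        (inferInstance : MeasurableSpace S) := by
  change MeasurableSpace.comap (Prod.map Y id) (MeasurableSpace.prod _ _) ⊔
    MeasurableSpace.comap (Z ∘ Prod.fst) _ = _
  rw [← MeasurableSpace.comap_comp, MeasurableSpace.comap_prodMap, MeasurableSpace.comap_id]
  simp only [MeasurableSpace.prod, MeasurableSpace.comap_sup]
  exact sup_right_comm _ _ _

lemma MeasurableSpace.prod_le_prod_left {α β : Type*} {m₁ m₂ : MeasurableSpace α}
    (h : m₁ ≤ m₂) (m : MeasurableSpace β) : m₁.prod m ≤ m₂.prod m :=
  sup_le_sup_right (MeasurableSpace.comap_mono h) _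

open scoped ENNReal

namespace MeasureTheory

section Mixture

variable {Ω S : Type*} [MeasurableSpace Ω] [MeasurableSpace S] [MeasurableSingletonClass S]
  (P : S → Measure Ω) (π : S → ℝ≥0∞)

lemma lintegral_mixtureMeasure (f : Ω × S → ℝ≥0∞) :
    ∫⁻ p, f p ∂mixtureMeasure P π = ∑' s, π s * ∫⁻ ω, f (ω, s) ∂P s := by
  simp only [mixtureMeasure, lintegral_sum_measure, lintegral_smul_measure,
    (measurableEmbedding_prod_mk_right _).lintegral_map, smul_eq_mul]

lemma isProbabilityMeasure_mixtureMeasure [∀ s, IsProbabilityMeasure (P s)]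
    (hπ : ∑' s, π s = 1) : IsProbabilityMeasure (mixtureMeasure P π) := by
  constructor
  rw [← lintegral_one, lintegral_mixtureMeasure]
  simpa using hπ

omit [MeasurableSingletonClass S] in
lemma restrict_mixtureMeasure {A : Set (Ω × S)} (hA : MeasurableSet A) :
    (mixtureMeasure P π).restrict A =
      mixtureMeasure (fun s => (P s).restrict ((·, s) ⁻¹' A)) π := by
  simp only [mixtureMeasure, Measure.restrict_sum _ hA, Measure.restrict_smul,
    Measure.restrict_map measurable_prodMk_right hA]

lemma integral_mixtureMeasure {f : Ω × S → ℝ} (hf : Integrable f (mixtureMeasure P π)) :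
    ∫ p, f p ∂mixtureMeasure P π = ∑' s, (π s).toReal * ∫ ω, f (ω, s) ∂P s := by
  simp only [mixtureMeasure, integral_sum_measure hf, integral_smul_measure,
    (measurableEmbedding_prod_mk_right _).integral_map, smul_eq_mul]

lemma setIntegral_mixtureMeasure {A : Set (Ω × S)} (hA : MeasurableSet A) {f : Ω × S → ℝ}
    (hf : IntegrableOn f A (mixtureMeasure P π)) :
    ∫ p in A, f p ∂mixtureMeasure P π =
      ∑' s, (π s).toReal * ∫ ω in (·, s) ⁻¹' A, f (ω, s) ∂P s := by
  rw [IntegrableOn, restrict_mixtureMeasure P π hA] at hf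
  rw [restrict_mixtureMeasure P π hA, integral_mixtureMeasure _ π hf]

lemma setIntegral_prod_singleton_mixtureMeasure {A : Set Ω} (hA : MeasurableSet A) (s : S)
    {f : Ω × S → ℝ} (hf : IntegrableOn f (A ×ˢ {s}) (mixtureMeasure P π)) :
    ∫ p in A ×ˢ {s}, f p ∂mixtureMeasure P π = (π s).toReal * ∫ ω in A, f (ω, s) ∂P s := by
  rw [setIntegral_mixtureMeasure P π (hA.prod (measurableSet_singleton s)) hf,
    tsum_eq_single s fun t ht => by simp [ht]]
  simp

lemma Integrable.slice_mixtureMeasure {f : Ω × S → ℝ}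
    (hf : Integrable f (mixtureMeasure P π)) {s : S} (hπ₀ : π s ≠ 0) (hπ_top : π s ≠ ∞) :
    Integrable (fun ω => f (ω, s)) (P s) := by
  have hf_s := hf.mono_measure (Measure.le_sum _ s)
  rwa [integrable_smul_measure hπ₀ hπ_top,
    (measurableEmbedding_prod_mk_right s).integrable_map_iff] at hf_s

lemma Integrable.comp_fst_mixtureMeasure_of_lintegral_le {f g : Ω → ℝ}
    (hf : Integrable (fun p => f p.1) (mixtureMeasure P π)) (hg : StronglyMeasurable g)
    (hgf : ∀ s, ∫⁻ ω, ‖g ω‖ₑ ∂P s ≤ ∫⁻ ω, ‖f ω‖ₑ ∂P s) :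
    Integrable (fun p => g p.1) (mixtureMeasure P π) := by
  refine ⟨(hg.comp_measurable measurable_fst).aestronglyMeasurable, ?_⟩
  calc ∫⁻ p, ‖g p.1‖ₑ ∂mixtureMeasure P π
      = ∑' s, π s * ∫⁻ ω, ‖g ω‖ₑ ∂P s := lintegral_mixtureMeasure P π _
    _ ≤ ∑' s, π s * ∫⁻ ω, ‖f ω‖ₑ ∂P s :=
        ENNReal.tsum_le_tsum fun s => mul_le_mul_right (hgf s) _
    _ = ∫⁻ p, ‖f p.1‖ₑ ∂mixtureMeasure P π :=
        (lintegral_mixtureMeasure P π fun p => ‖f p.1‖ₑ).symm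
    _ < ∞ := hf.hasFiniteIntegral

end Mixture

section CondExp

variable {Ω S : Type*} {m mΩ : MeasurableSpace Ω} [MeasurableSpace S]
  [MeasurableSingletonClass S] {P : S → Measure Ω} {π : S → ℝ≥0∞} [∀ s, IsFiniteMeasure (P s)]
  [IsFiniteMeasure (mixtureMeasure P π)] {f g : Ω → ℝ}

lemma ae_eq_condExp_mixtureMeasure_of_forall (hm : m ≤ mΩ) (hπ₀ : ∀ s, π s ≠ 0)
    (hπ_top : ∀ s, π s ≠ ∞) (hf : Integrable (fun p => f p.1) (mixtureMeasure P π))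
    (hg : StronglyMeasurable[m] g) (hgf : ∀ s, g =ᵐ[P s] (P s)[f | m]) :
    (fun p => g p.1) =ᵐ[mixtureMeasure P π]
      (mixtureMeasure P π)[fun p => f p.1 | m.prod ‹MeasurableSpace S›] := by
  have hm_prod := MeasurableSpace.prod_le_prod_left hm ‹MeasurableSpace S›
  have hg_int : Integrable (fun p => g p.1) (mixtureMeasure P π) := by
    refine hf.comp_fst_mixtureMeasure_of_lintegral_le P π (hg.mono hm) fun s => ?_
    rw [← eLpNorm_one_eq_lintegral_enorm, ← eLpNorm_one_eq_lintegral_enorm,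
      eLpNorm_congr_ae (hgf s)]
    exact eLpNorm_condExp_le_eLpNorm f le_rfl
  refine ae_eq_condExp_of_forall_setIntegral_eq hm_prod hf (fun _ _ _ => hg_int.integrableOn)
    (fun A hA _ => ?_) (hg.comp_measurable measurable_fst).aestronglyMeasurable
  have hA_slice s : MeasurableSet[m] ((·, s) ⁻¹' A) := measurable_prodMk_right hA
  rw [setIntegral_mixtureMeasure P π (hm_prod _ hA) hg_int.integrableOn,
    setIntegral_mixtureMeasure P π (hm_prod _ hA) hf.integrableOn]
  refine tsum_congr fun s => congrArg _ ?_
  rw [setIntegral_congr_ae (hm _ (hA_slice s)) ((hgf s).mono fun _ hω _ => hω),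
    setIntegral_condExp hm (hf.slice_mixtureMeasure P π (hπ₀ s) (hπ_top s))
      (hA_slice s)]

lemma ae_eq_condExp_of_ae_eq_condExp_mixtureMeasure (hm : m ≤ mΩ) {s : S} (hπ₀ : π s ≠ 0)
    (hπ_top : π s ≠ ∞) (hf : Integrable (fun p => f p.1) (mixtureMeasure P π))
    (hg : StronglyMeasurable[m] g)
    (hgf : (fun p => g p.1) =ᵐ[mixtureMeasure P π]
      (mixtureMeasure P π)[fun p => f p.1 | m.prod ‹MeasurableSpace S›]) :
    g =ᵐ[P s] (P s)[f | m] := by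
  have hm_prod := MeasurableSpace.prod_le_prod_left hm ‹MeasurableSpace S›
  have hg_int : Integrable (fun p => g p.1) (mixtureMeasure P π) :=
    integrable_condExp.congr hgf.symm
  refine ae_eq_condExp_of_forall_setIntegral_eq hm (hf.slice_mixtureMeasure P π hπ₀ hπ_top)
    (fun _ _ _ => (hg_int.slice_mixtureMeasure P π hπ₀ hπ_top).integrableOn)
    (fun B hB _ => ?_) hg.aestronglyMeasurable
  have hBs : MeasurableSet[m.prod ‹_›] (B ×ˢ {s}) := hB.prod (measurableSet_singleton s)
  refine mul_left_cancel₀ (ENNReal.toReal_ne_zero.2 ⟨hπ₀, hπ_top⟩) ?_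
  calc (π s).toReal * ∫ ω in B, g ω ∂P s
      = ∫ p in B ×ˢ {s}, g p.1 ∂mixtureMeasure P π :=
        (setIntegral_prod_singleton_mixtureMeasure P π (hm _ hB) s hg_int.integrableOn).symm
    _ = ∫ p in B ×ˢ {s}, (mixtureMeasure P π)[fun p => f p.1 | m.prod ‹_›] p
          ∂mixtureMeasure P π :=
        setIntegral_congr_ae (hm_prod _ hBs) (hgf.mono fun _ hp _ => hp)
    _ = ∫ p in B ×ˢ {s}, f p.1 ∂mixtureMeasure P π := setIntegral_condExp hm_prod hf hBs
    _ = (π s).toReal * ∫ ω in B, f ω ∂P s :=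
        setIntegral_prod_singleton_mixtureMeasure P π (hm _ hB) s hf.integrableOn

lemma ae_eq_condExp_mixtureMeasure_iff (hm : m ≤ mΩ) (hπ₀ : ∀ s, π s ≠ 0)
    (hπ_top : ∀ s, π s ≠ ∞) (hf : Integrable (fun p => f p.1) (mixtureMeasure P π))
    (hg : StronglyMeasurable[m] g) :
    (fun p => g p.1) =ᵐ[mixtureMeasure P π]
        (mixtureMeasure P π)[fun p => f p.1 | m.prod ‹MeasurableSpace S›] ↔
      ∀ s, g =ᵐ[P s] (P s)[f | m] :=
  ⟨fun hgf _ =>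
    ae_eq_condExp_of_ae_eq_condExp_mixtureMeasure hm (hπ₀ _) (hπ_top _) hf hg hgf,
    ae_eq_condExp_mixtureMeasure_of_forall hm hπ₀ hπ_top hf hg⟩

end CondExp

end MeasureTheory

theorem eciRegime_iff_condIndepFun_mixture_general
    {Ω S α β γ : Type*} [MeasurableSpace Ω] [MeasurableSpace α]
    [MeasurableSpace β] [MeasurableSpace γ]
    [MeasurableSpace S] [MeasurableSingletonClass S]
    (P : S → Measure Ω) (hP : ∀ s, IsProbabilityMeasure (P s))
    (π : S → ENNReal) (hπ : ∀ s, 0 < π s) (hπ1 : ∑' s, π s = 1)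
    (X : Ω → α) (Y : Ω → β) (Z : Ω → γ)
    (hX : Measurable X) (hY : Measurable Y) (hZ : Measurable Z) :
    ECIRegime P X Y Z ↔
      CondIndepFun (mixtureMeasure P π)
        (fun p => X p.1) (fun p => (Y p.1, p.2)) (fun p => Z p.1) := by
  have := hP
  have := isProbabilityMeasure_mixtureMeasure P π hπ1
  have hπ_top s : π s ≠ ∞ := ENNReal.ne_top_of_tsum_ne_top (hπ1 ▸ ENNReal.one_ne_top) s
  have hm : MeasurableSpace.comap Y inferInstance ⊔ MeasurableSpace.comap Z inferInstance ≤
      ‹MeasurableSpace Ω› := sup_le hY.comap_le hZ.comap_le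
  have hZm : Measurable[MeasurableSpace.comap Y inferInstance ⊔
      MeasurableSpace.comap Z inferInstance] Z := (comap_measurable Z).mono le_sup_right le_rfl
  unfold ECIRegime CondIndepFun
  rw [MeasurableSpace.comap_sup_comap_eq_prod]
  refine forall₃_congr fun h hh ⟨C, hC⟩ => exists_congr fun w => and_congr_right fun hw => ?_
  have hhX : Integrable (fun p => h (X p.1)) (mixtureMeasure P π) :=
    .of_bound (hh.comp (hX.comp measurable_fst)).aestronglyMeasurable C
      (ae_of_all _ fun p => hC _)
  exact (ae_eq_condExp_mixtureMeasure_iff hm (fun s => (hπ s).ne') hπ_top hhX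
    (hw.comp hZm).stronglyMeasurable).symm

/-- Extended conditional independence `X ⫫ (Y, σ) | Z` over a countable regime set `S` holds
if and only if ordinary stochastic conditional independence `X ⫫ (Y, σ) | Z` holds under the
mixture measure `P*` (with strictly positive weights summing to one). -/
theorem eciRegime_iff_condIndepFun_mixture
    {Ω S α β γ : Type*} [MeasurableSpace Ω] [MeasurableSpace α]
    [MeasurableSpace β] [MeasurableSpace γ]
    [Countable S] [MeasurableSpace S] [MeasurableSingletonClass S]
    (P : S → Measure Ω) (hP : ∀ s, IsProbabilityMeasure (P s))
    (π : S → ENNReal) (hπ : ∀ s, 0 < π s) (hπ1 : ∑' s, π s = 1)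
    (X : Ω → α) (Y : Ω → β) (Z : Ω → γ)
    (hX : Measurable X) (hY : Measurable Y) (hZ : Measurable Z) :
    ECIRegime P X Y Z ↔
      CondIndepFun (mixtureMeasure P π)
        (fun p => X p.1) (fun p => (Y p.1, p.2)) (fun p => Z p.1) :=
  eciRegime_iff_condIndepFun_mixture_general P hP π hπ hπ1 X Y Z hX hY hZ
end

section
/- There exist a probability space with a uniform-[0,1] random variable and two regimes o and s over variables (U, A, Y) with Y = 1{A = U}, U uniform on [0,1] in both regimes, A = U under regime o, and A uniform on [0,1] independent of U under regime s, such that: (i) the law of U is the same in both regimes; (ii) the conditional law of Y given (U, A) is the same in both regimes; (iii) U ⫫ A under regime s; (iv) Y ⫫ U | A holds trivially in each regime separately (Y is a.s. constant: Y = 1 a.s. under o, Y = 0 a.s. under s); yet (v) the conditional distribution of Y given A differs between the two regimes, i.e., simple stability Y ⫫ σ | A fails. -/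
open MeasureTheory

open scoped Classical in
/-- Specification of Counter-example 1 (continuous case): regimes `o` and `s` over `(U, A, Y)`
with `Y = 1{A = U}`, `U` uniform on `[0,1]` in both regimes, `A = U` a.s. under `o`, and
`A` uniform on `[0,1]` independent of `U` under `s`; extended stability and sequential
irrelevance hold but simple stability `Y ⫫ σ | A` fails. -/
def CtsCounterexampleSpec (Ω : Type) [MeasurableSpace Ω] (Po Ps : Measure Ω)
    (U A Y : Ω → ℝ) : Prop :=
  IsProbabilityMeasure Po ∧ IsProbabilityMeasure Ps ∧
  Measurable U ∧ Measurable A ∧ Measurable Y ∧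
  -- Y = 1 if A = U, else Y = 0, in both regimes
  (∀ ω, Y ω = if A ω = U ω then 1 else 0) ∧
  -- U is uniform on [0,1] in both regimes (so the law of U is the same in both regimes)
  Po.map U = volume.restrict (Set.Icc (0 : ℝ) 1) ∧
  Ps.map U = volume.restrict (Set.Icc (0 : ℝ) 1) ∧
  -- in regime o, A = U almost surely
  (∀ᵐ ω ∂Po, A ω = U ω) ∧
  -- in regime s, A is uniform on [0,1] and independent of U (so s is a control strategy)
  Ps.map A = volume.restrict (Set.Icc (0 : ℝ) 1) ∧
  ProbabilityTheory.IndepFun U A Ps ∧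
  -- extended stability: a common version of the conditional law of Y given (U, A) exists,
  -- i.e. Y ⫫ σ | (U, A)
  (∃ w : ℝ × ℝ → ℝ, Measurable w ∧
    (fun ω => w (U ω, A ω)) =ᵐ[Po]
      Po[Y | MeasurableSpace.comap (fun ω => (U ω, A ω)) inferInstance] ∧
    (fun ω => w (U ω, A ω)) =ᵐ[Ps]
      Ps[Y | MeasurableSpace.comap (fun ω => (U ω, A ω)) inferInstance]) ∧
  -- sequential irrelevance holds trivially in each regime: Y is a.s. constant
  (∀ᵐ ω ∂Po, Y ω = 1) ∧
  (∀ᵐ ω ∂Ps, Y ω = 0) ∧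
  -- but simple stability fails: no common version of the conditional expectation of Y
  -- given A valid in both regimes, i.e. ¬ (Y ⫫ σ | A)
  ¬ ∃ w : ℝ → ℝ, Measurable w ∧
      (fun ω => w (A ω)) =ᵐ[Po] Po[Y | MeasurableSpace.comap A inferInstance] ∧
      (fun ω => w (A ω)) =ᵐ[Ps] Ps[Y | MeasurableSpace.comap A inferInstance]

section Aux

open scoped Classical

noncomputable def ctsMu : Measure ℝ := volume.restrict (Set.Icc (0 : ℝ) 1)

instance : IsProbabilityMeasure ctsMu :=
  ⟨by simp [ctsMu, Real.volume_Icc]⟩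

lemma ctsMeasurable_diag : Measurable (fun x : ℝ => (x, x)) :=
  measurable_id.prodMk measurable_id

noncomputable def ctsPo : Measure (ℝ × ℝ) := ctsMu.map (fun x : ℝ => (x, x))

noncomputable def ctsPs : Measure (ℝ × ℝ) := ctsMu.prod ctsMu

instance : IsProbabilityMeasure ctsPo :=
  Measure.isProbabilityMeasure_map ctsMeasurable_diag.aemeasurable

instance : IsProbabilityMeasure ctsPs := by
  unfold ctsPs; infer_instance

lemma ctsPo_map_fst : ctsPo.map Prod.fst = ctsMu := by
  rw [ctsPo, Measure.map_map measurable_fst ctsMeasurable_diag]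
  exact Measure.map_id

lemma ctsPo_map_snd : ctsPo.map Prod.snd = ctsMu := by
  rw [ctsPo, Measure.map_map measurable_snd ctsMeasurable_diag]
  exact Measure.map_id

lemma ctsMeasurableSet_eq : MeasurableSet {p : ℝ × ℝ | p.2 = p.1} :=
  measurableSet_eq_fun measurable_snd measurable_fst

lemma ctsPo_ae_eq : ∀ᵐ ω ∂ctsPo, ω.2 = ω.1 := by
  rw [ctsPo, ae_map_iff ctsMeasurable_diag.aemeasurable ctsMeasurableSet_eq]
  filter_upwards with x using rfl

lemma ctsPs_eq_zero : ctsPs {p : ℝ × ℝ | p.2 = p.1} = 0 := by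
  rw [ctsPs, Measure.prod_apply ctsMeasurableSet_eq]
  have h0 : ∀ x : ℝ, ctsMu (Prod.mk x ⁻¹' {p : ℝ × ℝ | p.2 = p.1}) = 0 := by
    intro x
    have : (Prod.mk x ⁻¹' {p : ℝ × ℝ | p.2 = p.1}) = {x} := by
      ext y; simp [eq_comm]
    rw [this, ctsMu, Measure.restrict_apply (measurableSet_singleton x)]
    exact measure_mono_null Set.inter_subset_left (Real.volume_singleton)
  rw [lintegral_congr h0]
  simp

lemma ctsPs_ae_ne : ∀ᵐ ω ∂ctsPs, ¬ ω.2 = ω.1 :=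
  (ae_iff).2 (by simpa using ctsPs_eq_zero)

end Aux

/-- There exists a probability model realizing Counter-example 1: extended stability together
with sequential irrelevance does not imply simple stability, absent positivity. -/
theorem exists_cts_counterexample :
    ∃ (Ω : Type) (_ : MeasurableSpace Ω) (Po Ps : Measure Ω) (U A Y : Ω → ℝ),
      CtsCounterexampleSpec Ω Po Ps U A Y := by
  classical
  refine ⟨ℝ × ℝ, inferInstance, ctsPo, ctsPs, Prod.fst, Prod.snd,
    fun ω => if ω.2 = ω.1 then 1 else 0, ?_⟩
  set μ := ctsMu with hμdef
  set Y : ℝ × ℝ → ℝ := fun ω => if ω.2 = ω.1 then 1 else 0 with hYdef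
  have hYmeas : Measurable Y :=
    Measurable.ite ctsMeasurableSet_eq measurable_const measurable_const
  have hYo : ∀ᵐ ω ∂ctsPo, Y ω = 1 := by
    filter_upwards [ctsPo_ae_eq] with ω h using by simp [hYdef, h]
  have hYs : ∀ᵐ ω ∂ctsPs, Y ω = 0 := by
    filter_upwards [ctsPs_ae_ne] with ω h using by simp [hYdef, h]
  refine ⟨inferInstance, inferInstance, measurable_fst, measurable_snd, hYmeas,
    fun ω => rfl, ctsPo_map_fst, ?_, ctsPo_ae_eq, ?_, ?_, ?_, hYo, hYs, ?_⟩
  · rw [ctsPs]; simp [ctsMu]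
  · rw [ctsPs]; simp [ctsMu]
  · -- independence of fst and snd under the product measure
    rw [ProbabilityTheory.indepFun_iff_map_prod_eq_prod_map_map
      measurable_fst.aemeasurable measurable_snd.aemeasurable]
    have : (fun ω : ℝ × ℝ => (ω.1, ω.2)) = id := by ext ω <;> rfl
    rw [this, Measure.map_id, ctsPs]
    simp
  · -- extended stability
    refine ⟨fun p => if p.2 = p.1 then 1 else 0, hYmeas, ?_, ?_⟩
    all_goals
    · have hpair : Measurable (fun ω : ℝ × ℝ => (ω.1, ω.2)) :=
        measurable_fst.prodMk measurable_snd
      have hm : MeasurableSpace.comap (fun ω : ℝ × ℝ => (ω.1, ω.2)) inferInstance ≤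
          (inferInstance : MeasurableSpace (ℝ × ℝ)) :=
        hpair.comap_le
      have hsm : StronglyMeasurable[MeasurableSpace.comap
          (fun ω : ℝ × ℝ => (ω.1, ω.2)) inferInstance] Y := by
        have : Measurable[MeasurableSpace.comap
            (fun ω : ℝ × ℝ => (ω.1, ω.2)) inferInstance] Y :=
          hYmeas.comp (Measurable.of_comap_le le_rfl)
        exact this.stronglyMeasurable
      have hint : ∀ (ν : Measure (ℝ × ℝ)) [IsProbabilityMeasure ν], Integrable Y ν := by
        intro ν _
        refine (integrable_const (1 : ℝ)).mono' hYmeas.aestronglyMeasurable ?_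
        filter_upwards with ω
        by_cases h : ω.2 = ω.1 <;> simp [hYdef, h]
      rw [condExp_of_stronglyMeasurable hm hsm (hint _)]
  · -- simple stability fails
    rintro ⟨w, hw, hwo, hws⟩
    have hm : MeasurableSpace.comap (Prod.snd : ℝ × ℝ → ℝ) inferInstance ≤
        (inferInstance : MeasurableSpace (ℝ × ℝ)) := measurable_snd.comap_le
    have ho1 : (fun ω : ℝ × ℝ => w ω.2) =ᵐ[ctsPo] fun _ => (1 : ℝ) := by
      refine hwo.trans ?_
      calc ctsPo[Y | MeasurableSpace.comap Prod.snd inferInstance]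
          =ᵐ[ctsPo] ctsPo[(fun _ => (1 : ℝ)) | MeasurableSpace.comap Prod.snd inferInstance] :=
            condExp_congr_ae hYo
        _ =ᵐ[ctsPo] fun _ => (1 : ℝ) := by rw [condExp_const hm]
    have hs0 : (fun ω : ℝ × ℝ => w ω.2) =ᵐ[ctsPs] fun _ => (0 : ℝ) := by
      refine hws.trans ?_
      calc ctsPs[Y | MeasurableSpace.comap Prod.snd inferInstance]
          =ᵐ[ctsPs] ctsPs[(fun _ => (0 : ℝ)) | MeasurableSpace.comap Prod.snd inferInstance] :=
            condExp_congr_ae hYs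
        _ =ᵐ[ctsPs] fun _ => (0 : ℝ) := by rw [condExp_const hm]
    -- transfer to μ
    have h1 : μ (w ⁻¹' {1}) = 1 := by
      have : ctsPo {ω : ℝ × ℝ | w ω.2 = 1} = 1 := by
        have hset : {ω : ℝ × ℝ | w ω.2 = 1} =ᵐ[ctsPo] Set.univ := by
          rw [Filter.eventuallyEq_set]
          filter_upwards [ho1] with ω h
          simp [h]
        rw [measure_congr hset, measure_univ]
      have hset : {ω : ℝ × ℝ | w ω.2 = 1} = Prod.snd ⁻¹' (w ⁻¹' {1}) := rfl
      rw [hset, ← Measure.map_apply measurable_snd (hw (measurableSet_singleton 1)),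
        ctsPo_map_snd] at this
      exact this
    have h0 : μ (w ⁻¹' {0}) = 1 := by
      have : ctsPs {ω : ℝ × ℝ | w ω.2 = 0} = 1 := by
        have hset : {ω : ℝ × ℝ | w ω.2 = 0} =ᵐ[ctsPs] Set.univ := by
          rw [Filter.eventuallyEq_set]
          filter_upwards [hs0] with ω h
          simp [h]
        rw [measure_congr hset, measure_univ]
      have hset : {ω : ℝ × ℝ | w ω.2 = 0} = Prod.snd ⁻¹' (w ⁻¹' {0}) := rfl
      rw [hset, ← Measure.map_apply measurable_snd (hw (measurableSet_singleton 0))] at this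
      rw [ctsPs] at this
      simp only [Measure.map_snd_prod, measure_univ, one_smul] at this
      exact this
    have hdisj : Disjoint (w ⁻¹' {1}) (w ⁻¹' {0}) := by
      rw [Set.disjoint_left]
      intro a h1 h0
      simp only [Set.mem_preimage, Set.mem_singleton_iff] at h1 h0
      rw [h1] at h0; norm_num at h0
    have hle : μ (w ⁻¹' {1} ∪ w ⁻¹' {0}) ≤ 1 := by
      simpa using measure_mono (Set.subset_univ _) (μ := μ)
    rw [measure_union hdisj (hw (measurableSet_singleton 0)), h1, h0] at hle
    norm_num at hle
end

section
/- Let all variables (U_1,...,U_n, L_1,...,L_{n+1}, A_1,...,A_n) be discrete random variables with joint distributions P_o and P_s. Assume extended stability: for each i and each regime σ ∈ {o, s}, the conditional probability p(u_i, l_i | ū_{i-1}, l̄_{i-1}, ā_{i-1}; σ) does not depend on σ (wherever both conditioning events have positive probability). Assume s is a control strategy: p(a_i | ū_i, l̄_i, ā_{i-1}; s) = p(a_i | l̄_i, ā_{i-1}; s) whenever defined. Then for every k and every configuration (ū_k, l̄_k, ā_k): if p(l̄_k, ā_k; s) > 0 and p(ū_k, l̄_k, ā_k; o) > 0, then p(ū_k,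 l̄_k, ā_k; s) > 0. -/
open MeasureTheory

/-- The partial-history event: the first `p` of the `L`'s, the first `q` of the `U`'s and the
first `r` of the `A`'s take the prescribed values `l`, `u`, `a` (0-based indexing; the time
order is `L i, U i, A i`). -/
def HistEvent {Ω : Type*} (L U A : ℕ → Ω → ℕ) (l u a : ℕ → ℕ) (p q r : ℕ) : Set Ω :=
  {ω | (∀ i < p, L i ω = l i) ∧ (∀ i < q, U i ω = u i) ∧ (∀ i < r, A i ω = a i)}

lemma histEvent_mono {Ω : Type*} (L U A : ℕ → Ω → ℕ) (l u a : ℕ → ℕ)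
    {p q r p' q' r' : ℕ} (hp : p' ≤ p) (hq : q' ≤ q) (hr : r' ≤ r) :
    HistEvent L U A l u a p q r ⊆ HistEvent L U A l u a p' q' r' := by
  rintro ω ⟨h1, h2, h3⟩
  exact ⟨fun i hi => h1 i (hi.trans_le hp), fun i hi => h2 i (hi.trans_le hq),
    fun i hi => h3 i (hi.trans_le hr)⟩

lemma toReal_pos_of_pos {Ω : Type*} [MeasurableSpace Ω] (μ : Measure Ω)
    [IsProbabilityMeasure μ] {S : Set Ω} (h : 0 < μ S) : 0 < (μ S).toReal :=
  ENNReal.toReal_pos h.ne' (measure_ne_top μ S)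

/-- Lemma 1 (discrete case): assume extended stability and that `s` is a control strategy.
Then, for every `k ≤ n` and every configuration `(ū_k, l̄_k, ā_k)`:
if `p(l̄_k, ā_k ; s) > 0` and `p(ū_k, l̄_k, ā_k ; o) > 0`, then `p(ū_k, l̄_k, ā_k ; s) > 0`. -/
theorem discrete_positivity_lemma
    {Ω : Type*} [MeasurableSpace Ω] (n : ℕ)
    (Po Ps : Measure Ω) [IsProbabilityMeasure Po] [IsProbabilityMeasure Ps]
    (L U A : ℕ → Ω → ℕ)
    (hL : ∀ i, Measurable (L i)) (hU : ∀ i, Measurable (U i)) (hA : ∀ i, Measurable (A i))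
    -- extended stability: p(u_i, l_i | ū_{i-1}, l̄_{i-1}, ā_{i-1} ; σ) does not depend on the
    -- regime σ ∈ {o, s}, wherever both conditioning events have positive probability
    (hES : ∀ i ≤ n, ∀ l u a : ℕ → ℕ,
      0 < Po (HistEvent L U A l u a i i i) → 0 < Ps (HistEvent L U A l u a i i i) →
        (Po (HistEvent L U A l u a (i + 1) (i + 1) i)).toReal /
            (Po (HistEvent L U A l u a i i i)).toReal =
          (Ps (HistEvent L U A l u a (i + 1) (i + 1) i)).toReal /
            (Ps (HistEvent L U A l u a i i i)).toReal)
    -- control strategy: p(a_i | ū_i, l̄_i, ā_{i-1} ; s) = p(a_i | l̄_i, ā_{i-1} ; s)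
    -- whenever both conditioning events have positive probability
    (hCS : ∀ i ≤ n, ∀ l u a : ℕ → ℕ,
      0 < Ps (HistEvent L U A l u a (i + 1) (i + 1) i) →
      0 < Ps (HistEvent L U A l u a (i + 1) 0 i) →
        (Ps (HistEvent L U A l u a (i + 1) (i + 1) (i + 1))).toReal /
            (Ps (HistEvent L U A l u a (i + 1) (i + 1) i)).toReal =
          (Ps (HistEvent L U A l u a (i + 1) 0 (i + 1))).toReal /
            (Ps (HistEvent L U A l u a (i + 1) 0 i)).toReal) :
    ∀ k ≤ n, ∀ l u a : ℕ → ℕ,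
      0 < Ps (HistEvent L U A l u a (k + 1) 0 (k + 1)) →
      0 < Po (HistEvent L U A l u a (k + 1) (k + 1) (k + 1)) →
      0 < Ps (HistEvent L U A l u a (k + 1) (k + 1) (k + 1)) := by
  -- a single induction/"one time-step" argument
  have mono : ∀ (μ : Measure Ω) (l u a : ℕ → ℕ) {p q r p' q' r' : ℕ},
      p' ≤ p → q' ≤ q → r' ≤ r → 0 < μ (HistEvent L U A l u a p q r) →
      0 < μ (HistEvent L U A l u a p' q' r') := by
    intro μ l u a p q r p' q' r' hp hq hr h
    exact h.trans_le (measure_mono (histEvent_mono L U A l u a hp hq hr))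
  have step : ∀ i ≤ n, ∀ l u a : ℕ → ℕ,
      0 < Po (HistEvent L U A l u a (i + 1) (i + 1) (i + 1)) →
      0 < Ps (HistEvent L U A l u a i i i) →
      0 < Ps (HistEvent L U A l u a (i + 1) 0 (i + 1)) →
      0 < Ps (HistEvent L U A l u a (i + 1) (i + 1) (i + 1)) := by
    intro i hi l u a hPoFull hPsi hPsL
    have hPoi : 0 < Po (HistEvent L U A l u a i i i) :=
      mono Po l u a (by omega) (by omega) (by omega) hPoFull
    have hPoNum : 0 < Po (HistEvent L U A l u a (i + 1) (i + 1) i) :=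
      mono Po l u a (by omega) (by omega) (by omega) hPoFull
    have hES' := hES i hi l u a hPoi hPsi
    have hLHS : 0 < (Po (HistEvent L U A l u a (i + 1) (i + 1) i)).toReal /
        (Po (HistEvent L U A l u a i i i)).toReal :=
      div_pos (toReal_pos_of_pos Po hPoNum) (toReal_pos_of_pos Po hPoi)
    rw [hES'] at hLHS
    -- deduce Ps (i+1, i+1, i) > 0
    have hPsMid : 0 < Ps (HistEvent L U A l u a (i + 1) (i + 1) i) := by
      rw [pos_iff_ne_zero]
      intro h0
      rw [h0] at hLHS
      simp at hLHS
    have hPsL' : 0 < Ps (HistEvent L U A l u a (i + 1) 0 i) :=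
      mono Ps l u a (by omega) (by omega) (by omega) hPsL
    have hCS' := hCS i hi l u a hPsMid hPsL'
    have hRHS : 0 < (Ps (HistEvent L U A l u a (i + 1) 0 (i + 1))).toReal /
        (Ps (HistEvent L U A l u a (i + 1) 0 i)).toReal :=
      div_pos (toReal_pos_of_pos Ps hPsL) (toReal_pos_of_pos Ps hPsL')
    rw [← hCS'] at hRHS
    rw [pos_iff_ne_zero]
    intro h0
    rw [h0] at hRHS
    simp at hRHS
  intro k
  induction k with
  | zero =>
    intro hk l u a hs ho
    exact step 0 hk l u a ho (mono Ps l u a (by omega) (by omega) (by omega) hs) hs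
  | succ k ih =>
    intro hk l u a hs ho
    have hIH : 0 < Ps (HistEvent L U A l u a (k + 1) (k + 1) (k + 1)) :=
      ih (by omega) l u a (mono Ps l u a (by omega) (by omega) (by omega) hs)
        (mono Po l u a (by omega) (by omega) (by omega) ho)
    exact step (k + 1) hk l u a ho hIH hs
end

section
/- Let all variables be discrete with joint distributions P_o (observational) and P_s (interventional). Assume: (1) extended stability: p(u_i, l_i | ū_{i-1}, l̄_{i-1}, ā_{i-1}; σ) is the same for σ = o and σ = s wherever both are defined; (2) s is a control strategy: A_i ⫫ Ū_i | (L̄_i, Ā_{i-1}) under P_s; (3) sequential irrelevance in the interventional regime: p(l_i | ū_{i-1}, l̄_{i-1}, ā_{i-1}; s) = p(l_i | l̄_{i-1}, ā_{i-1}; s) wherever defined, for i = 1,...,n+1. Then simple stability holds: for every i and every l_i, there is a function w(l̄_{i-1}, ā_{i-1}) such that p(l_i | l̄_{i-1}, ā_{i-1}; σ) = w(l̄_{i-1}, ā_{i-1}) for both σ = o and σ = s, whenever p(l̄_{i-1}, ā_{i-1}; σ) > 0. No positivity assumption is required. -/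
open MeasureTheory

namespace HistEvent

open Function

variable {Ω : Type*} {L U A : ℕ → Ω → ℕ}

theorem congr_u {l u u' a : ℕ → ℕ} {p q r : ℕ} (h : ∀ i < q, u i = u' i) :
    HistEvent L U A l u a p q r = HistEvent L U A l u' a p q r := by
  ext ω
  simp +contextual only [HistEvent, Set.mem_ofPred_eq, h]

theorem subset_of_le {l u a : ℕ → ℕ} {p q r p' q' r' : ℕ} (hp : p ≤ p') (hq : q ≤ q')
    (hr : r ≤ r') : HistEvent L U A l u a p' q' r' ⊆ HistEvent L U A l u a p q r :=
  fun _ ⟨hL, hU, hA⟩ => ⟨fun i hi => hL i (hi.trans_le hp), fun i hi => hU i (hi.trans_le hq),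
    fun i hi => hA i (hi.trans_le hr)⟩

theorem iUnion_update (l u a : ℕ → ℕ) (p q r : ℕ) :
    ⋃ m, HistEvent L U A l (update u q m) a p (q + 1) r = HistEvent L U A l u a p q r := by
  ext ω
  simp only [Set.mem_iUnion, HistEvent, Set.mem_ofPred_eq, Nat.lt_succ_iff_lt_or_eq, or_imp,
    forall_and, forall_eq, update_self]
  constructor
  · rintro ⟨m, hL, ⟨hU, -⟩, hA⟩
    exact ⟨hL, fun i hi => (hU i hi).trans (update_of_ne hi.ne m u), hA⟩
  · rintro ⟨hL, hU, hA⟩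
    exact ⟨U q ω, hL, ⟨fun i hi => (hU i hi).trans (update_of_ne hi.ne _ u).symm, rfl⟩, hA⟩

theorem pairwise_disjoint_update (l u a : ℕ → ℕ) (p q r : ℕ) :
    Pairwise (Disjoint on fun m => HistEvent L U A l (update u q m) a p (q + 1) r) :=
  fun m m' hm => Set.disjoint_left.2 fun ω ⟨_, hU, _⟩ ⟨_, hU', _⟩ => hm <| by
    simpa using (hU q q.lt_succ_self).symm.trans (hU' q q.lt_succ_self)

variable [MeasurableSpace Ω]

theorem measurableSet (hL : ∀ i, Measurable (L i)) (hU : ∀ i, Measurable (U i))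
    (hA : ∀ i, Measurable (A i)) (l u a : ℕ → ℕ) (p q r : ℕ) :
    MeasurableSet (HistEvent L U A l u a p q r) := by
  simp only [HistEvent, Set.ofPred_and, Set.ofPred_forall]
  have coord (X : ℕ → Ω → ℕ) (hX : ∀ i, Measurable (X i)) (x : ℕ → ℕ) (k : ℕ) :
      MeasurableSet (⋂ i, ⋂ (_ : i < k), {ω | X i ω = x i}) :=
    .iInter fun i => .iInter fun _ => hX i (measurableSet_singleton (x i))
  exact (coord L hL l p).inter ((coord U hU u q).inter (coord A hA a r))

theorem toReal_measure_eq_tsum (hL : ∀ i, Measurable (L i)) (hU : ∀ i, Measurable (U i))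
    (hA : ∀ i, Measurable (A i)) (μ : Measure Ω) [IsFiniteMeasure μ] (l u a : ℕ → ℕ)
    (p q r : ℕ) :
    (μ (HistEvent L U A l u a p q r)).toReal =
      ∑' m, (μ (HistEvent L U A l (update u q m) a p (q + 1) r)).toReal := by
  rw [← iUnion_update, measure_iUnion (pairwise_disjoint_update l u a p q r)
    fun _ => measurableSet hL hU hA _ _ _ _ _ _, ENNReal.tsum_toReal_eq fun _ => measure_ne_top _ _]

theorem toReal_measure_eq_mul_of_le (hL : ∀ i, Measurable (L i)) (hU : ∀ i, Measurable (U i))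
    (hA : ∀ i, Measurable (A i)) (μ : Measure Ω) [IsFiniteMeasure μ] {l a : ℕ → ℕ}
    {p p' q q' r : ℕ} (c : ℝ) (hq : q ≤ q')
    (h : ∀ u, (μ (HistEvent L U A l u a p' q' r)).toReal =
      c * (μ (HistEvent L U A l u a p q' r)).toReal) (u : ℕ → ℕ) :
    (μ (HistEvent L U A l u a p' q r)).toReal = c * (μ (HistEvent L U A l u a p q r)).toReal := by
  induction hq using Nat.decreasingInduction generalizing u with
  | self => exact h u
  | of_succ k _ ih =>
    rw [toReal_measure_eq_tsum hL hU hA μ l u a p' k r,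
      toReal_measure_eq_tsum hL hU hA μ l u a p k r, ← tsum_mul_left]
    exact tsum_congr fun m => ih _

end HistEvent

theorem MeasureTheory.Measure.pos_of_toReal_div_eq {Ω : Type*} [MeasurableSpace Ω]
    {μ ν : Measure Ω} [IsFiniteMeasure μ] {s t s' t' : Set Ω}
    (h : (μ s).toReal / (μ t).toReal = (ν s').toReal / (ν t').toReal) (hs : 0 < μ s)
    (ht : 0 < μ t) : 0 < ν s' := by
  have hpos : (μ s).toReal / (μ t).toReal ≠ 0 :=
    div_ne_zero (ENNReal.toReal_pos hs.ne' (measure_ne_top μ s)).ne'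
      (ENNReal.toReal_pos ht.ne' (measure_ne_top μ t)).ne'
  rw [h, div_ne_zero_iff, ENNReal.toReal_ne_zero] at hpos
  exact pos_iff_ne_zero.2 hpos.1.1

section Stability

open Function

variable {Ω : Type*} [MeasurableSpace Ω]

def ExtendedStability (n : ℕ) (Po Ps : Measure Ω) (L U A : ℕ → Ω → ℕ) : Prop :=
  ∀ i ≤ n, ∀ l u a : ℕ → ℕ,
    0 < Po (HistEvent L U A l u a i i i) → 0 < Ps (HistEvent L U A l u a i i i) →
      (Po (HistEvent L U A l u a (i + 1) (i + 1) i)).toReal /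
          (Po (HistEvent L U A l u a i i i)).toReal =
        (Ps (HistEvent L U A l u a (i + 1) (i + 1) i)).toReal /
          (Ps (HistEvent L U A l u a i i i)).toReal

def IsControlStrategy (n : ℕ) (Ps : Measure Ω) (L U A : ℕ → Ω → ℕ) : Prop :=
  ∀ i ≤ n, ∀ l u a : ℕ → ℕ,
    0 < Ps (HistEvent L U A l u a (i + 1) (i + 1) i) →
    0 < Ps (HistEvent L U A l u a (i + 1) 0 i) →
      (Ps (HistEvent L U A l u a (i + 1) (i + 1) (i + 1))).toReal /
          (Ps (HistEvent L U A l u a (i + 1) (i + 1) i)).toReal =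
        (Ps (HistEvent L U A l u a (i + 1) 0 (i + 1))).toReal /
          (Ps (HistEvent L U A l u a (i + 1) 0 i)).toReal

def SequentialIrrelevance (n : ℕ) (Ps : Measure Ω) (L U A : ℕ → Ω → ℕ) : Prop :=
  ∀ i ≤ n, ∀ l u a : ℕ → ℕ,
    0 < Ps (HistEvent L U A l u a i i i) → 0 < Ps (HistEvent L U A l u a i 0 i) →
      (Ps (HistEvent L U A l u a (i + 1) i i)).toReal /
          (Ps (HistEvent L U A l u a i i i)).toReal =
        (Ps (HistEvent L U A l u a (i + 1) 0 i)).toReal /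
          (Ps (HistEvent L U A l u a i 0 i)).toReal

variable {n : ℕ} {Po Ps : Measure Ω} [IsFiniteMeasure Po] [IsFiniteMeasure Ps]
  {L U A : ℕ → Ω → ℕ}

theorem measure_histEvent_pos_of_isControlStrategy (hES : ExtendedStability n Po Ps L U A)
    (hCS : IsControlStrategy n Ps L U A) {k : ℕ} (hk : k ≤ n + 1) {l u a : ℕ → ℕ}
    (hs : 0 < Ps (HistEvent L U A l u a k 0 k)) (ho : 0 < Po (HistEvent L U A l u a k k k)) :
    0 < Ps (HistEvent L U A l u a k k k) := by
  induction k with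
  | zero => exact hs
  | succ k ih =>
    have hk' : k ≤ n := by omega
    have ho_k : 0 < Po (HistEvent L U A l u a k k k) :=
      ho.trans_le (measure_mono (HistEvent.subset_of_le k.le_succ k.le_succ k.le_succ))
    have hs_k : 0 < Ps (HistEvent L U A l u a k k k) :=
      ih (by omega)
        (hs.trans_le (measure_mono (HistEvent.subset_of_le k.le_succ le_rfl k.le_succ))) ho_k
    have hs_LU : 0 < Ps (HistEvent L U A l u a (k + 1) (k + 1) k) :=
      Measure.pos_of_toReal_div_eq (hES k hk' l u a ho_k hs_k)
        (ho.trans_le (measure_mono (HistEvent.subset_of_le le_rfl le_rfl k.le_succ))) ho_k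
    have hs_L : 0 < Ps (HistEvent L U A l u a (k + 1) 0 k) :=
      hs.trans_le (measure_mono (HistEvent.subset_of_le le_rfl le_rfl k.le_succ))
    exact Measure.pos_of_toReal_div_eq (hCS k hk' l u a hs_LU hs_L).symm hs hs_L

theorem toReal_measure_histEvent_succ_eq_mul (hL : ∀ i, Measurable (L i))
    (hU : ∀ i, Measurable (U i)) (hA : ∀ i, Measurable (A i))
    (hES : ExtendedStability n Po Ps L U A) (hCS : IsControlStrategy n Ps L U A)
    (hSI : SequentialIrrelevance n Ps L U A) {i : ℕ} (hi : i ≤ n) (l u a : ℕ → ℕ)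
    (hs : 0 < Ps (HistEvent L U A l u a i 0 i)) :
    (Po (HistEvent L U A l u a (i + 1) i i)).toReal =
      (Ps (HistEvent L U A l u a (i + 1) 0 i)).toReal / (Ps (HistEvent L U A l u a i 0 i)).toReal *
        (Po (HistEvent L U A l u a i i i)).toReal := by
  rcases (zero_le : 0 ≤ Po (HistEvent L U A l u a i i i)).eq_or_lt with h0 | ho
  · rw [← h0, measure_mono_null (HistEvent.subset_of_le i.le_succ le_rfl le_rfl) h0.symm]
    simp
  have hden : (Po (HistEvent L U A l u a i i i)).toReal ≠ 0 :=
    (ENNReal.toReal_pos ho.ne' (measure_ne_top _ _)).ne'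
  have hs' := measure_histEvent_pos_of_isControlStrategy hES hCS (by omega) hs ho
  have hupd (m : ℕ) : HistEvent L U A l (update u i m) a i i i = HistEvent L U A l u a i i i :=
    HistEvent.congr_u fun j hj => update_of_ne hj.ne _ _
  have hmarg : (Po (HistEvent L U A l u a (i + 1) i i)).toReal /
        (Po (HistEvent L U A l u a i i i)).toReal =
      (Ps (HistEvent L U A l u a (i + 1) i i)).toReal /
        (Ps (HistEvent L U A l u a i i i)).toReal := by
    rw [HistEvent.toReal_measure_eq_tsum hL hU hA Po l u a (i + 1) i i,
      HistEvent.toReal_measure_eq_tsum hL hU hA Ps l u a (i + 1) i i,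
      ← tsum_div_const, ← tsum_div_const]
    exact tsum_congr fun m => by
      simpa only [hupd] using hES i hi l (update u i m) a (by rwa [hupd]) (by rwa [hupd])
  rw [← hSI i hi l u a hs' hs, ← hmarg, div_mul_cancel₀ _ hden]

theorem toReal_div_measure_histEvent_eq (hL : ∀ i, Measurable (L i))
    (hU : ∀ i, Measurable (U i)) (hA : ∀ i, Measurable (A i))
    (hES : ExtendedStability n Po Ps L U A) (hCS : IsControlStrategy n Ps L U A)
    (hSI : SequentialIrrelevance n Ps L U A) {i : ℕ} (hi : i ≤ n) {l u a : ℕ → ℕ}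
    (ho : 0 < Po (HistEvent L U A l u a i 0 i)) (hs : 0 < Ps (HistEvent L U A l u a i 0 i)) :
    (Po (HistEvent L U A l u a (i + 1) 0 i)).toReal / (Po (HistEvent L U A l u a i 0 i)).toReal =
      (Ps (HistEvent L U A l u a (i + 1) 0 i)).toReal /
        (Ps (HistEvent L U A l u a i 0 i)).toReal := by
  have hmul (u' : ℕ → ℕ) : (Po (HistEvent L U A l u' a (i + 1) i i)).toReal =
      (Ps (HistEvent L U A l u a (i + 1) 0 i)).toReal / (Ps (HistEvent L U A l u a i 0 i)).toReal *
        (Po (HistEvent L U A l u' a i i i)).toReal := by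
    have hforget (p : ℕ) : HistEvent L U A l u' a p 0 i = HistEvent L U A l u a p 0 i :=
      HistEvent.congr_u fun _ h => absurd h (Nat.not_lt_zero _)
    simpa only [hforget] using
      toReal_measure_histEvent_succ_eq_mul hL hU hA hES hCS hSI hi l u' a (by rwa [hforget])
  rw [HistEvent.toReal_measure_eq_mul_of_le hL hU hA Po _ i.zero_le hmul u, mul_div_assoc,
    div_self (ENNReal.toReal_pos ho.ne' (measure_ne_top _ _)).ne', mul_one]

end Stability

/-- Theorem 2 (discrete case): extended stability, `s` a control strategy, and sequential
irrelevance in the *interventional* regime `s` together imply simple stability—with no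
positivity assumption required. -/
theorem discrete_sequential_irrelevance_implies_simple_stability
    {Ω : Type*} [MeasurableSpace Ω] (n : ℕ)
    (Po Ps : Measure Ω) [IsProbabilityMeasure Po] [IsProbabilityMeasure Ps]
    (L U A : ℕ → Ω → ℕ)
    (hL : ∀ i, Measurable (L i)) (hU : ∀ i, Measurable (U i)) (hA : ∀ i, Measurable (A i))
    -- (1) extended stability: p(u_i, l_i | ū_{i-1}, l̄_{i-1}, ā_{i-1} ; σ) is the same for
    -- σ = o and σ = s wherever both are defined
    (hES : ∀ i ≤ n, ∀ l u a : ℕ → ℕ,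
      0 < Po (HistEvent L U A l u a i i i) → 0 < Ps (HistEvent L U A l u a i i i) →
        (Po (HistEvent L U A l u a (i + 1) (i + 1) i)).toReal /
            (Po (HistEvent L U A l u a i i i)).toReal =
          (Ps (HistEvent L U A l u a (i + 1) (i + 1) i)).toReal /
            (Ps (HistEvent L U A l u a i i i)).toReal)
    -- (2) s is a control strategy: A_i ⫫ Ū_i | (L̄_i, Ā_{i-1}) under P_s
    (hCS : ∀ i ≤ n, ∀ l u a : ℕ → ℕ,
      0 < Ps (HistEvent L U A l u a (i + 1) (i + 1) i) →
      0 < Ps (HistEvent L U A l u a (i + 1) 0 i) →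
        (Ps (HistEvent L U A l u a (i + 1) (i + 1) (i + 1))).toReal /
            (Ps (HistEvent L U A l u a (i + 1) (i + 1) i)).toReal =
          (Ps (HistEvent L U A l u a (i + 1) 0 (i + 1))).toReal /
            (Ps (HistEvent L U A l u a (i + 1) 0 i)).toReal)
    -- (3) sequential irrelevance in the interventional regime:
    -- p(l_i | ū_{i-1}, l̄_{i-1}, ā_{i-1} ; s) = p(l_i | l̄_{i-1}, ā_{i-1} ; s) wherever defined
    (hSI : ∀ i ≤ n, ∀ l u a : ℕ → ℕ,
      0 < Ps (HistEvent L U A l u a i i i) → 0 < Ps (HistEvent L U A l u a i 0 i) →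
        (Ps (HistEvent L U A l u a (i + 1) i i)).toReal /
            (Ps (HistEvent L U A l u a i i i)).toReal =
          (Ps (HistEvent L U A l u a (i + 1) 0 i)).toReal /
            (Ps (HistEvent L U A l u a i 0 i)).toReal) :
    -- simple stability: for each i there is a function w(l̄_{i-1}, ā_{i-1}) (for each value
    -- l_i, encoded by letting w depend on the whole configuration l) serving as the
    -- conditional pmf of L_i in both regimes, wherever defined
    ∀ i ≤ n, ∃ w : (ℕ → ℕ) → (ℕ → ℕ) → ℝ, ∀ l a : ℕ → ℕ,
      (0 < Po (HistEvent L U A l (fun _ => 0) a i 0 i) →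
        (Po (HistEvent L U A l (fun _ => 0) a (i + 1) 0 i)).toReal /
            (Po (HistEvent L U A l (fun _ => 0) a i 0 i)).toReal = w l a) ∧
      (0 < Ps (HistEvent L U A l (fun _ => 0) a i 0 i) →
        (Ps (HistEvent L U A l (fun _ => 0) a (i + 1) 0 i)).toReal /
            (Ps (HistEvent L U A l (fun _ => 0) a i 0 i)).toReal = w l a) := by
  intro i hi
  refine ⟨fun l a => if 0 < Ps (HistEvent L U A l (fun _ => 0) a i 0 i) then
      (Ps (HistEvent L U A l (fun _ => 0) a (i + 1) 0 i)).toReal /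
        (Ps (HistEvent L U A l (fun _ => 0) a i 0 i)).toReal
    else
      (Po (HistEvent L U A l (fun _ => 0) a (i + 1) 0 i)).toReal /
        (Po (HistEvent L U A l (fun _ => 0) a i 0 i)).toReal,
    fun l a => ⟨fun ho => ?_, fun hs => (if_pos hs).symm⟩⟩
  beta_reduce
  split_ifs with hs
  · exact toReal_div_measure_histEvent_eq hL hU hA hES hCS hSI hi ho hs
  · rfl
end

section
/- There exist a probability space, binary random variables L_1, A, and a random variable L_2 = L_1 + A, with two regimes o (P_o(A=0)=1) and s (P_s(A=1)=1), L_1 uniform on {0,1} in both regimes, such that: (i) the extended conditional independence L_2 ⫫ σ | (L_1, A) holds (there is a common version of E[L_2 | L_1, A] valid in both regimes); yet (ii) there exist random variables W_o (equal to L_1 if A=0, and 0 if A=1) and W_s (equal to 2 if A=0, and L_1+1 if A=1) such that W_o is a version of E[L_2 | L_1, A; o], W_s is a version of E[L_2 | L_1, A; s], but W_o ≠ W_s almost surely under both P_o and P_s, and neither W_o nor W_s is a valid version in both regimes simultaneously. -/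
open MeasureTheory

open scoped Classical in
/-- Specification of Counter-example 2: binary `L₁`, `A` with `L₂ = L₁ + A`, regime `o` with
`A = 0` a.s. and regime `s` with `A = 1` a.s., `L₁` uniform on `{0,1}` in both regimes.
The extended conditional independence `L₂ ⫫ σ | (L₁, A)` holds (a common version of
`E[L₂ | L₁, A]` exists for both regimes), yet the particular versions
`W_o = L₁·1{A=0}` and `W_s = 2·1{A=0} + (L₁+1)·1{A=1}` valid in regimes `o` and `s`
respectively differ a.s. in both regimes, and neither is valid in both regimes at once. -/
def VersionCounterexampleSpec (Ω : Type) [MeasurableSpace Ω] (Po Ps : Measure Ω)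
    (L₁ A : Ω → ℝ) : Prop :=
  IsProbabilityMeasure Po ∧ IsProbabilityMeasure Ps ∧
  Measurable L₁ ∧ Measurable A ∧
  (∀ ω, L₁ ω = 0 ∨ L₁ ω = 1) ∧ (∀ ω, A ω = 0 ∨ A ω = 1) ∧
  -- regime o never treats, regime s always treats
  (∀ᵐ ω ∂Po, A ω = 0) ∧ (∀ᵐ ω ∂Ps, A ω = 1) ∧
  -- L₁ is uniform on {0,1} in both regimes
  Po {ω | L₁ ω = 0} = 1 / 2 ∧ Po {ω | L₁ ω = 1} = 1 / 2 ∧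
  Ps {ω | L₁ ω = 0} = 1 / 2 ∧ Ps {ω | L₁ ω = 1} = 1 / 2 ∧
  -- with L₂ := L₁ + A and the σ-algebra generated by (L₁, A):
  (let L₂ : Ω → ℝ := fun ω => L₁ ω + A ω
   let m : MeasurableSpace Ω := MeasurableSpace.comap (fun ω => (L₁ ω, A ω)) inferInstance
   let Wo : Ω → ℝ := fun ω => if A ω = 0 then L₁ ω else 0
   let Ws : Ω → ℝ := fun ω => if A ω = 0 then 2 else L₁ ω + 1
   -- (i) extended conditional independence L₂ ⫫ σ | (L₁, A): a common version exists
   (∃ w : ℝ × ℝ → ℝ, Measurable w ∧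
      (fun ω => w (L₁ ω, A ω)) =ᵐ[Po] Po[L₂ | m] ∧
      (fun ω => w (L₁ ω, A ω)) =ᵐ[Ps] Ps[L₂ | m]) ∧
   -- (ii) W_o is a version under P_o, W_s is a version under P_s
   Wo =ᵐ[Po] Po[L₂ | m] ∧
   Ws =ᵐ[Ps] Ps[L₂ | m] ∧
   -- but W_o ≠ W_s almost surely under both regimes
   (∀ᵐ ω ∂Po, Wo ω ≠ Ws ω) ∧
   (∀ᵐ ω ∂Ps, Wo ω ≠ Ws ω) ∧
   -- and neither supplies a version simultaneously valid in both regimes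
   ¬ Wo =ᵐ[Ps] Ps[L₂ | m] ∧
   ¬ Ws =ᵐ[Po] Po[L₂ | m])

/-! The outcome `L₂ = L₁ + A` is a function of `(L₁, A)`, so in either regime its conditional
expectation given `(L₁, A)` is `L₂` itself and `w (l, a) = l + a` is a common version. The
regimes live on the disjoint events `{A = 0}` and `{A = 1}`, so a version under one regime is
unconstrained on the support of the other: `W_o` and `W_s` match `L₂` where their own regime
lives but differ from each other at every point. -/

theorem condExp_comp_comap {Ω β : Type*} {mΩ : MeasurableSpace Ω} [MeasurableSpace β]
    {μ : Measure Ω} [IsFiniteMeasure μ] {X : Ω → β} (hX : Measurable X) {g : β → ℝ}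
    (hg : Measurable g) (hint : Integrable (fun ω => g (X ω)) μ) :
    μ[fun ω => g (X ω) | MeasurableSpace.comap X ‹_›] = fun ω => g (X ω) :=
  condExp_of_stronglyMeasurable hX.comap_le
    (hg.comp (comap_measurable X)).stronglyMeasurable hint

theorem not_ae_eq_of_ae_ne {Ω β : Type*} {mΩ : MeasurableSpace Ω} {μ : Measure Ω} [NeZero μ]
    {f g : Ω → β} (hne : ∀ᵐ ω ∂μ, f ω ≠ g ω) : ¬ f =ᵐ[μ] g := fun heq =>
  let ⟨_, hω⟩ := (heq.and hne).exists
  hω.2 hω.1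

noncomputable def uniformOnFstWithSnd (b : Bool) : Measure (Bool × Bool) :=
  (PMF.uniformOfFintype Bool).toMeasure.map (·, b)

instance (b : Bool) : IsProbabilityMeasure (uniformOnFstWithSnd b) :=
  Measure.isProbabilityMeasure_map (measurable_of_finite _).aemeasurable

theorem ae_snd_uniformOnFstWithSnd (b : Bool) : ∀ᵐ ω ∂uniformOnFstWithSnd b, ω.2 = b :=
  (ae_map_iff (measurable_of_finite _).aemeasurable .of_discrete).2 (.of_forall fun _ => rfl)

theorem uniformOnFstWithSnd_fst_eq (b l : Bool) :
    uniformOnFstWithSnd b {ω | ω.1 = l} = 1 / 2 := by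
  rw [uniformOnFstWithSnd, Measure.map_apply (measurable_of_finite _) .of_discrete]
  simp [PMF.uniformOfFintype_apply]

/-- Counter-example 2 exists: without positivity, an arbitrary version of a conditional
expectation computed under one regime need not serve as a version under the other, even
though a common version exists. -/
theorem exists_version_counterexample :
    ∃ (Ω : Type) (_ : MeasurableSpace Ω) (Po Ps : Measure Ω) (L₁ A : Ω → ℝ),
      VersionCounterexampleSpec Ω Po Ps L₁ A := by
  refine ⟨Bool × Bool, inferInstance, uniformOnFstWithSnd false, uniformOnFstWithSnd true,
    fun ω => ω.1.toNat, fun ω => ω.2.toNat, ?_⟩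
  have hce (b : Bool) := condExp_comp_comap (μ := uniformOnFstWithSnd b)
    (X := fun ω => ((ω.1.toNat : ℝ), (ω.2.toNat : ℝ))) (g := fun p => p.1 + p.2)
    .of_discrete (by fun_prop) .of_finite
  refine ⟨inferInstance, inferInstance, .of_discrete, .of_discrete,
    fun ω => by cases ω.1 <;> simp, fun ω => by cases ω.2 <;> simp,
    (ae_snd_uniformOnFstWithSnd false).mono fun ω h => by simp [h],
    (ae_snd_uniformOnFstWithSnd true).mono fun ω h => by simp [h],
    by simpa using uniformOnFstWithSnd_fst_eq false false,
    by simpa using uniformOnFstWithSnd_fst_eq false true,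
    by simpa using uniformOnFstWithSnd_fst_eq true false,
    by simpa using uniformOnFstWithSnd_fst_eq true true, ?_⟩
  intro L₂ m Wo Ws
  have hWo : Wo =ᵐ[uniformOnFstWithSnd false] L₂ :=
    (ae_snd_uniformOnFstWithSnd false).mono fun ω h => by simp [Wo, L₂, h]
  have hWs : Ws =ᵐ[uniformOnFstWithSnd true] L₂ :=
    (ae_snd_uniformOnFstWithSnd true).mono fun ω h => by simp [Ws, L₂, h]
  have hne : ∀ ω, Wo ω ≠ Ws ω := by
    rintro ⟨_ | _, _ | _⟩ <;> norm_num [Wo, Ws]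
  rw [hce, hce]
  exact ⟨⟨fun p => p.1 + p.2, by fun_prop, .rfl, .rfl⟩, hWo, hWs, .of_forall hne, .of_forall hne,
    fun h => not_ae_eq_of_ae_ne (.of_forall hne) (h.trans hWs.symm),
    fun h => not_ae_eq_of_ae_ne (.of_forall hne) (hWo.trans h.symm)⟩
end

section
/- In the mixture representation over a countable regime set, conditional independence statements involving σ obey the semi-graphoid axioms: in particular, if X ⫫ (Y, σ) | Z (extended sense) then both X ⫫ Y | (Z, σ) (extended sense) and X ⫫ σ | Z (extended sense) hold. -/
open MeasureTheory

/-- Semi-graphoid decomposition/weak-union for the regime indicator: over a countable regime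
set `S` with distributions `{P_s}`, if `X ⫫ (Y, σ) | Z` in the extended sense (a single
measurable `w(Z)` is a version of `E[h(X) | Y, Z]` under every `P_s`, for each bounded
measurable `h`), then both `X ⫫ Y | (Z, σ)` (for each `s` some `w(s, Z)` is a version of
`E_{P_s}[h(X) | Y, Z]`) and `X ⫫ σ | Z` (a single measurable `v(Z)` is a version of
`E_{P_s}[h(X) | Z]` under every `P_s`) hold. -/
theorem eci_decomposition_weakUnion
    {Ω S α β γ : Type*} [MeasurableSpace Ω] [MeasurableSpace α]
    [MeasurableSpace β] [MeasurableSpace γ] [Countable S]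
    (P : S → Measure Ω) (hP : ∀ s, IsProbabilityMeasure (P s))
    (X : Ω → α) (Y : Ω → β) (Z : Ω → γ)
    (hX : Measurable X) (hY : Measurable Y) (hZ : Measurable Z)
    -- X ⫫ (Y, σ) | Z in the extended sense
    (h : ∀ h : α → ℝ, Measurable h → (∃ C, ∀ x, |h x| ≤ C) →
      ∃ w : γ → ℝ, Measurable w ∧
        ∀ s, (fun ω => w (Z ω)) =ᵐ[P s]
          (P s)[fun ω => h (X ω) |
            MeasurableSpace.comap Y inferInstance ⊔ MeasurableSpace.comap Z inferInstance]) :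
    -- X ⫫ Y | (Z, σ) in the extended sense
    (∀ h : α → ℝ, Measurable h → (∃ C, ∀ x, |h x| ≤ C) →
      ∃ w : S → γ → ℝ, (∀ s, Measurable (w s)) ∧
        ∀ s, (fun ω => w s (Z ω)) =ᵐ[P s]
          (P s)[fun ω => h (X ω) |
            MeasurableSpace.comap Y inferInstance ⊔ MeasurableSpace.comap Z inferInstance]) ∧
    -- X ⫫ σ | Z in the extended sense
    (∀ h : α → ℝ, Measurable h → (∃ C, ∀ x, |h x| ≤ C) →
      ∃ v : γ → ℝ, Measurable v ∧
        ∀ s, (fun ω => v (Z ω)) =ᵐ[P s]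
          (P s)[fun ω => h (X ω) | MeasurableSpace.comap Z inferInstance]) := by
  constructor
  · intro f hf hbd
    obtain ⟨w, hw, hws⟩ := h f hf hbd
    exact ⟨fun _ => w, fun _ => hw, hws⟩
  · intro f hf hbd
    obtain ⟨w, hw, hws⟩ := h f hf hbd
    obtain ⟨C, hC⟩ := hbd
    refine ⟨w, hw, fun s => ?_⟩
    haveI := hP s
    have hmZ : MeasurableSpace.comap Z inferInstance ≤ (inferInstance : MeasurableSpace Ω) :=
      hZ.comap_le
    have hmYZ : MeasurableSpace.comap Y inferInstance ⊔ MeasurableSpace.comap Z inferInstance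
        ≤ (inferInstance : MeasurableSpace Ω) := sup_le hY.comap_le hZ.comap_le
    have hsm : StronglyMeasurable[MeasurableSpace.comap Z inferInstance] (fun ω => w (Z ω)) := by
      exact (hw.comp (measurable_iff_comap_le.mpr le_rfl)).stronglyMeasurable
    have hint : Integrable (fun ω => w (Z ω)) (P s) :=
      integrable_condExp.congr (hws s).symm
    calc (fun ω => w (Z ω))
        =ᵐ[P s] (P s)[fun ω => w (Z ω) | MeasurableSpace.comap Z inferInstance] :=
          (condExp_of_stronglyMeasurable hmZ hsm hint).symm ▸ ae_eq_refl _
      _ =ᵐ[P s] (P s)[(P s)[fun ω => f (X ω) |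
            MeasurableSpace.comap Y inferInstance ⊔ MeasurableSpace.comap Z inferInstance] |
            MeasurableSpace.comap Z inferInstance] := condExp_congr_ae (hws s)
      _ =ᵐ[P s] (P s)[fun ω => f (X ω) | MeasurableSpace.comap Z inferInstance] :=
          condExp_condExp_of_le le_sup_right hmYZ
end

section
/- In a two-regime discrete setting with regimes o and s, if simple stability holds (for each i there is a common conditional pmf w_i(l_i; l̄_{i-1}, ā_{i-1}) valid in both regimes wherever defined) and positivity holds (every event of positive P_s-probability has positive P_o-probability), then the consequence E[k(Y); s] is identified from the observational regime: E[k(Y); s] = Σ over all (l̄_{n+1}, ā_n) with positive P_s-probability of k(l_{n+1}) · Π_{i=1}^{n+1} p(l_i | l̄_{i-1}, ā_{i-1}; o) · Π_{i=1}^n p(a_i | l̄_i, ā_{i-1}; s). -/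
/-!
The history takes countably many values, so `E[k(Y); s]` is the sum of `k(l_{n+1})` weighted by
the `P_s`-probability of each configuration, and only configurations of positive
`P_s`-probability contribute. For such a configuration every partial-history event has positive
`P_s`-probability, hence by positivity positive `P_o`-probability, so the chain rule writes its
`P_s`-probability as the telescoping product of consecutive conditional probabilities, and simple
stability replaces the factors for the `L`'s by their observational counterparts.
-/

open MeasureTheory

/-- The partial-history event: the first `p` of the `L`'s and the first `q` of the `A`'s
take the prescribed values (0-based indexing; the time order is `L 0, A 0, L 1, A 1, …`,
so `L i` corresponds to `L_{i+1}` and `A i` to `A_{i+1}` of the paper). -/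
def LAEvent {Ω : Type*} {n : ℕ} (L : Fin (n + 1) → Ω → ℕ) (A : Fin n → Ω → ℕ)
    (l : Fin (n + 1) → ℕ) (a : Fin n → ℕ) (p q : ℕ) : Set Ω :=
  {ω | (∀ j : Fin (n + 1), (j : ℕ) < p → L j ω = l j) ∧
       (∀ j : Fin n, (j : ℕ) < q → A j ω = a j)}

theorem interleaved_ratio_prod_telescope {K : Type*} [Field K] (P : ℕ → ℕ → K) (m : ℕ)
    (hdiag : ∀ i ≤ m, P i i ≠ 0) (hsub : ∀ i < m, P (i + 1) i ≠ 0) :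
    (∏ i ∈ Finset.range (m + 1), P (i + 1) i / P i i) *
        ∏ i ∈ Finset.range m, P (i + 1) (i + 1) / P (i + 1) i =
      P (m + 1) m / P 0 0 := by
  induction m with
  | zero => simp
  | succ m ih =>
    have h₀ := hdiag 0 (Nat.zero_le _)
    have h₁ := hdiag (m + 1) le_rfl
    have h₂ := hsub m (Nat.lt_succ_self m)
    rw [Finset.prod_range_succ (fun i => P (i + 1) (i + 1) / P (i + 1) i),
      Finset.prod_range_succ (fun i => P (i + 1) i / P i i) (m + 1), mul_mul_mul_comm,
      ih (fun i hi => hdiag i (hi.trans m.le_succ)) (fun i hi => hsub i (hi.trans m.lt_succ_self))]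
    field_simp

/-- No integrability hypothesis: both sides take the junk value `0` exactly when the series
fails to converge absolutely. -/
theorem integral_eq_tsum_measureReal_singleton_mul {X : Type*} [MeasurableSpace X] [Countable X]
    [MeasurableSingletonClass X] (μ : Measure X) [IsFiniteMeasure μ] (f : X → ℝ) :
    ∫ x, f x ∂μ = ∑' x, μ.real {x} * f x := by
  conv_lhs => rw [← Measure.sum_smul_dirac μ]
  exact integral_sum_dirac fun x => measure_ne_top μ {x}

theorem integral_comp_eq_tsum_measureReal_preimage {Ω X : Type*} [MeasurableSpace Ω]
    [MeasurableSpace X] [Countable X] [MeasurableSingletonClass X] (μ : Measure Ω)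
    [IsFiniteMeasure μ] {T : Ω → X} (hT : Measurable T) (g : X → ℝ) :
    ∫ ω, g (T ω) ∂μ = ∑' x, μ.real (T ⁻¹' {x}) * g x := by
  rw [← integral_map hT.aemeasurable (measurable_of_countable g).aestronglyMeasurable,
    integral_eq_tsum_measureReal_singleton_mul]
  simp only [map_measureReal_apply hT (measurableSet_singleton _)]

section LAEvent

variable {Ω : Type*} {n : ℕ} (L : Fin (n + 1) → Ω → ℕ) (A : Fin n → Ω → ℕ)
  (l : Fin (n + 1) → ℕ) (a : Fin n → ℕ)

theorem measurableSet_LAEvent [MeasurableSpace Ω] (hL : ∀ i, Measurable (L i))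
    (hA : ∀ i, Measurable (A i)) (p q : ℕ) : MeasurableSet (LAEvent L A l a p q) := by
  have hL' := fun j : Fin (n + 1) => hL j (measurableSet_singleton (l j))
  have hA' := fun j : Fin n => hA j (measurableSet_singleton (a j))
  simp only [LAEvent, Set.ofPred_and, Set.ofPred_forall]
  measurability

theorem LAEvent_subset_of_le {p q p' q' : ℕ} (hp : p ≤ p') (hq : q ≤ q') :
    LAEvent L A l a p' q' ⊆ LAEvent L A l a p q :=
  fun _ ⟨hl, ha⟩ => ⟨fun j hj => hl j (hj.trans_le hp), fun j hj => ha j (hj.trans_le hq)⟩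

@[simp]
theorem LAEvent_zero_zero : LAEvent L A l a 0 0 = Set.univ := by
  ext ω
  simp [LAEvent]

def history (ω : Ω) : (Fin (n + 1) → ℕ) × (Fin n → ℕ) :=
  (fun j => L j ω, fun j => A j ω)

theorem measurable_history [MeasurableSpace Ω] (hL : ∀ i, Measurable (L i))
    (hA : ∀ i, Measurable (A i)) : Measurable (history L A) :=
  (measurable_pi_lambda _ hL).prodMk (measurable_pi_lambda _ hA)

theorem history_preimage_singleton :
    history L A ⁻¹' {(l, a)} = LAEvent L A l a (n + 1) n := by
  ext ω
  simp [history, LAEvent, funext_iff, Fin.is_lt, Fin.is_le]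

theorem toReal_measure_LAEvent_eq_prod_ratios [MeasurableSpace Ω] (μ : Measure Ω)
    [IsProbabilityMeasure μ] (hpos : 0 < μ (LAEvent L A l a (n + 1) n)) :
    (μ (LAEvent L A l a (n + 1) n)).toReal =
      (∏ i : Fin (n + 1),
        (μ (LAEvent L A l a ((i : ℕ) + 1) i)).toReal / (μ (LAEvent L A l a i i)).toReal) *
      ∏ i : Fin n,
        (μ (LAEvent L A l a ((i : ℕ) + 1) ((i : ℕ) + 1))).toReal /
          (μ (LAEvent L A l a ((i : ℕ) + 1) i)).toReal := by
  have hne : ∀ p q, p ≤ n + 1 → q ≤ n → (μ (LAEvent L A l a p q)).toReal ≠ 0 :=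
    fun p q hp hq => (ENNReal.toReal_pos
      (hpos.trans_le (measure_mono (LAEvent_subset_of_le L A l a hp hq))).ne'
      (measure_ne_top _ _)).ne'
  rw [Fin.prod_univ_eq_prod_range (fun i => (μ (LAEvent L A l a (i + 1) i)).toReal /
      (μ (LAEvent L A l a i i)).toReal),
    Fin.prod_univ_eq_prod_range (fun i => (μ (LAEvent L A l a (i + 1) (i + 1))).toReal /
      (μ (LAEvent L A l a (i + 1) i)).toReal),
    interleaved_ratio_prod_telescope (fun p q => (μ (LAEvent L A l a p q)).toReal) n
      (fun i hi => hne i i (by omega) hi) (fun i hi => hne (i + 1) i (by omega) hi.le)]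
  simp

end LAEvent

open scoped Classical in
theorem discrete_G_computation_identification_general
    {Ω : Type*} [MeasurableSpace Ω] (n : ℕ)
    (Po Ps : Measure Ω) [IsProbabilityMeasure Ps]
    (L : Fin (n + 1) → Ω → ℕ) (A : Fin n → Ω → ℕ)
    (hL : ∀ i, Measurable (L i)) (hA : ∀ i, Measurable (A i))
    (k : ℕ → ℝ)
    -- simple stability: for each i a common conditional pmf of L_i given the past, valid in
    -- both regimes wherever the conditioning event has positive probability
    (hSS : ∀ i : Fin (n + 1), ∃ w : (Fin (n + 1) → ℕ) → (Fin n → ℕ) → ℝ,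
      ∀ (l : Fin (n + 1) → ℕ) (a : Fin n → ℕ),
        (0 < Po (LAEvent L A l a i i) →
          (Po (LAEvent L A l a (i + 1) i)).toReal /
            (Po (LAEvent L A l a i i)).toReal = w l a) ∧
        (0 < Ps (LAEvent L A l a i i) →
          (Ps (LAEvent L A l a (i + 1) i)).toReal /
            (Ps (LAEvent L A l a i i)).toReal = w l a))
    -- positivity: every event of positive P_s-probability has positive P_o-probability
    (hpos : ∀ E : Set Ω, MeasurableSet E → 0 < Ps E → 0 < Po E) :
    ∫ ω, k (L ⟨n, Nat.lt_succ_self n⟩ ω) ∂Ps =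
      ∑' p : (Fin (n + 1) → ℕ) × (Fin n → ℕ),
        if 0 < Ps (LAEvent L A p.1 p.2 (n + 1) n) then
          k (p.1 ⟨n, Nat.lt_succ_self n⟩) *
            (∏ i : Fin (n + 1),
              (Po (LAEvent L A p.1 p.2 ((i : ℕ) + 1) i)).toReal /
                (Po (LAEvent L A p.1 p.2 i i)).toReal) *
            (∏ i : Fin n,
              (Ps (LAEvent L A p.1 p.2 ((i : ℕ) + 1) ((i : ℕ) + 1))).toReal /
                (Ps (LAEvent L A p.1 p.2 ((i : ℕ) + 1) i)).toReal)
        else 0 := by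
  refine (integral_comp_eq_tsum_measureReal_preimage Ps (measurable_history L A hL hA)
    (fun x => k (x.1 ⟨n, Nat.lt_succ_self n⟩))).trans (tsum_congr fun ⟨l, a⟩ => ?_)
  rw [history_preimage_singleton, measureReal_def]
  split_ifs with hx
  · have hpast : ∀ i : Fin (n + 1), 0 < Ps (LAEvent L A l a i i) := fun i =>
      hx.trans_le (measure_mono (LAEvent_subset_of_le L A l a i.is_lt.le i.is_le))
    have hstable : ∀ i : Fin (n + 1),
        (Po (LAEvent L A l a ((i : ℕ) + 1) i)).toReal / (Po (LAEvent L A l a i i)).toReal =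
          (Ps (LAEvent L A l a ((i : ℕ) + 1) i)).toReal / (Ps (LAEvent L A l a i i)).toReal := by
      intro i
      obtain ⟨w, hw⟩ := hSS i
      rw [(hw l a).1 (hpos _ (measurableSet_LAEvent L A l a hL hA i i) (hpast i)),
        (hw l a).2 (hpast i)]
    rw [Finset.prod_congr rfl fun i _ => hstable i,
      toReal_measure_LAEvent_eq_prod_ratios L A l a Ps hx]
    ring
  · simp [nonpos_iff_eq_zero.mp (not_lt.mp hx)]

open scoped Classical in
/-- Discrete G-computation with observational ingredients: under simple stability and
positivity, the consequence `E[k(Y) ; s]` equals the sum, over all configurations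
`(l̄_{n+1}, ā_n)` of positive interventional probability, of
`k(l_{n+1}) · ∏ᵢ p(lᵢ | l̄_{i-1}, ā_{i-1} ; o) · ∏ᵢ p(aᵢ | l̄ᵢ, ā_{i-1} ; s)`. -/
theorem discrete_G_computation_identification
    {Ω : Type*} [MeasurableSpace Ω] (n : ℕ)
    (Po Ps : Measure Ω) [IsProbabilityMeasure Po] [IsProbabilityMeasure Ps]
    (L : Fin (n + 1) → Ω → ℕ) (A : Fin n → Ω → ℕ)
    (hL : ∀ i, Measurable (L i)) (hA : ∀ i, Measurable (A i))
    (k : ℕ → ℝ) (hk : ∃ C, ∀ y, |k y| ≤ C)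
    -- simple stability: for each i a common conditional pmf of L_i given the past, valid in
    -- both regimes wherever the conditioning event has positive probability
    (hSS : ∀ i : Fin (n + 1), ∃ w : (Fin (n + 1) → ℕ) → (Fin n → ℕ) → ℝ,
      ∀ (l : Fin (n + 1) → ℕ) (a : Fin n → ℕ),
        (0 < Po (LAEvent L A l a i i) →
          (Po (LAEvent L A l a (i + 1) i)).toReal /
            (Po (LAEvent L A l a i i)).toReal = w l a) ∧
        (0 < Ps (LAEvent L A l a i i) →
          (Ps (LAEvent L A l a (i + 1) i)).toReal /
            (Ps (LAEvent L A l a i i)).toReal = w l a))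
    -- positivity: every event of positive P_s-probability has positive P_o-probability
    (hpos : ∀ E : Set Ω, MeasurableSet E → 0 < Ps E → 0 < Po E) :
    ∫ ω, k (L ⟨n, Nat.lt_succ_self n⟩ ω) ∂Ps =
      ∑' p : (Fin (n + 1) → ℕ) × (Fin n → ℕ),
        if 0 < Ps (LAEvent L A p.1 p.2 (n + 1) n) then
          k (p.1 ⟨n, Nat.lt_succ_self n⟩) *
            (∏ i : Fin (n + 1),
              (Po (LAEvent L A p.1 p.2 ((i : ℕ) + 1) i)).toReal /
                (Po (LAEvent L A p.1 p.2 i i)).toReal) *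
            (∏ i : Fin n,
              (Ps (LAEvent L A p.1 p.2 ((i : ℕ) + 1) ((i : ℕ) + 1))).toReal /
                (Ps (LAEvent L A p.1 p.2 ((i : ℕ) + 1) i)).toReal)
        else 0 :=
  discrete_G_computation_identification_general n Po Ps L A hL hA k hSS hpos
end
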